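/- arXiv:2105.06349 — 11 statements merged into one kernel-verified Lean document; each statement's English description precedes it below -/
import Mathlib

section
/- Every connected P4-free graph on at least two vertices has a spanning complete bipartite subgraph; that is, if G is a connected P4-free graph with at least two vertices, then its vertex set can be partitioned into two nonempty sets A and B such that every vertex of A is adjacent to every vertex of B. -/
open SimpleGraph

/-- `G` is a join of two nonempty vertex sets. -/
def IsJoinGraph {V : Type*} (G : SimpleGraph V) : Prop :=
  ∃ A B : Set V, A.Nonempty ∧ B.Nonempty ∧ Disjoint A B ∧ A ∪ B = Set.univ ∧
    ∀ a ∈ A, ∀ b ∈ B, G.Adj a b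

/-- Build an induced `P₄` from four vertices with the right adjacency pattern. -/
noncomputable def p4Emb {V : Type*} {G : SimpleGraph V} (a b c d : V)
    (hab : G.Adj a b) (hbc : G.Adj b c) (hcd : G.Adj c d)
    (hac : ¬ G.Adj a c) (had : ¬ G.Adj a d) (hbd : ¬ G.Adj b d)
    (nac : a ≠ c) (nad : a ≠ d) (nbd : b ≠ d) :
    pathGraph 4 ↪g G where
  toFun := ![a, b, c, d]
  inj' := by
    intro i j
    fin_cases i <;> fin_cases j <;> intro h <;>
      first
        | rfl
        | exact absurd h hab.ne | exact absurd h hbc.ne | exact absurd h hcd.ne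
        | exact absurd h hab.ne' | exact absurd h hbc.ne' | exact absurd h hcd.ne'
        | exact absurd h nac | exact absurd h nad | exact absurd h nbd
        | exact absurd h nac.symm | exact absurd h nad.symm | exact absurd h nbd.symm
  map_rel_iff' := by
    intro i j
    fin_cases i <;> fin_cases j <;>
      first
        | exact iff_of_false (G.irrefl) (by rw [pathGraph_adj]; decide)
        | exact iff_of_true hab (by rw [pathGraph_adj]; decide)
        | exact iff_of_true hbc (by rw [pathGraph_adj]; decide)
        | exact iff_of_true hcd (by rw [pathGraph_adj]; decide)
        | exact iff_of_true hab.symm (by rw [pathGraph_adj]; decide)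
        | exact iff_of_true hbc.symm (by rw [pathGraph_adj]; decide)
        | exact iff_of_true hcd.symm (by rw [pathGraph_adj]; decide)
        | exact iff_of_false hac (by rw [pathGraph_adj]; decide)
        | exact iff_of_false had (by rw [pathGraph_adj]; decide)
        | exact iff_of_false hbd (by rw [pathGraph_adj]; decide)
        | exact iff_of_false (fun h => hac h.symm) (by rw [pathGraph_adj]; decide)
        | exact iff_of_false (fun h => had h.symm) (by rw [pathGraph_adj]; decide)
        | exact iff_of_false (fun h => hbd h.symm) (by rw [pathGraph_adj]; decide)

theorem compl_p4free {V : Type*} {G : SimpleGraph V}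
    (h : IsEmpty (pathGraph 4 ↪g G)) : IsEmpty (pathGraph 4 ↪g Gᶜ) := by
  constructor
  intro f
  set σ : Fin 4 → Fin 4 := ![1,3,0,2] with hσdef
  have key : ∀ a b : Fin 4, (pathGraph 4).Adj a b ↔
      (σ a ≠ σ b ∧ ¬ (pathGraph 4).Adj (σ a) (σ b)) := by
    intro a b
    simp only [pathGraph_adj, hσdef]
    fin_cases a <;> fin_cases b <;> decide
  have hσ : Function.Injective σ := by
    intro a b
    fin_cases a <;> fin_cases b <;> simp [hσdef]
  refine h.elim' ?_
  refine ⟨⟨fun i => f (σ i), f.injective.comp hσ⟩, ?_⟩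
  intro a b
  simp only [Function.Embedding.coeFn_mk]
  rw [key a b]
  constructor
  · intro hadj
    refine ⟨fun hxy => hadj.ne (by rw [hxy]), fun hp4 => ?_⟩
    exact ((f.map_rel_iff).mpr hp4).2 hadj
  · rintro ⟨hne, hnp4⟩
    have hfne : f (σ a) ≠ f (σ b) := f.injective.ne hne
    have h2 : ¬ Gᶜ.Adj (f (σ a)) (f (σ b)) := fun hc => hnp4 (f.map_rel_iff.mp hc)
    rw [compl_adj] at h2
    push_neg at h2
    exact h2 hfne

/-- Key combinatorial step: if `G` minus a vertex `v₀` is a join, then `G` or `Gᶜ` is a join. -/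
theorem lemA {V : Type*} {G : SimpleGraph V} (hfree : IsEmpty (pathGraph 4 ↪g G))
    (v₀ : V) (A B : Set V) (hA : A.Nonempty) (hB : B.Nonempty)
    (hU : A ∪ B = {v₀}ᶜ) (hcross : ∀ a ∈ A, ∀ b ∈ B, G.Adj a b) :
    IsJoinGraph G ∨ IsJoinGraph Gᶜ := by
  classical
  set N : Set V := {x | G.Adj v₀ x} with hN
  set M : Set V := {x | x ≠ v₀ ∧ ¬ G.Adj v₀ x} with hM
  have hv₀A : v₀ ∉ A := fun h => by
    have : v₀ ∈ A ∪ B := Or.inl h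
    rw [hU] at this; exact this rfl
  have hv₀B : v₀ ∉ B := fun h => by
    have : v₀ ∈ A ∪ B := Or.inr h
    rw [hU] at this; exact this rfl
  have hmemAB : ∀ x, x ≠ v₀ → x ∈ A ∪ B := fun x hx => by rw [hU]; exact hx
  by_cases hMne : M.Nonempty
  · by_cases hNne : N.Nonempty
    · by_cases hMA : (M ∩ A).Nonempty
      · by_cases hMB : (M ∩ B).Nonempty
        · -- partition (N, Nᶜ)
          left
          refine ⟨N, Nᶜ, hNne, ⟨v₀, fun h => G.irrefl h⟩, disjoint_compl_right,
            Set.union_compl_self N, ?_⟩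
          intro x hx y hy
          have hxv : x ≠ v₀ := fun h => G.irrefl (h ▸ hx)
          by_cases hyv : y = v₀
          · exact hyv ▸ (hx : G.Adj v₀ x).symm
          · have hyM : y ∈ M := ⟨hyv, hy⟩
            by_contra hxy
            have hxAB := hmemAB x hxv
            have hyAB := hmemAB y hyv
            have hxyne : x ≠ y := fun h => (h ▸ hy) hx
            rcases hxAB with hxA | hxB
            · rcases hyAB with hyA | hyB
              · obtain ⟨b', hb'M, hb'B⟩ := hMB
                -- P4 : v₀ x b' y
                exact hfree.elim' (p4Emb v₀ x b' y hx (hcross x hxA b' hb'B)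
                  ((hcross y hyA b' hb'B).symm) hb'M.2 hyM.2 hxy
                  (Ne.symm hb'M.1) (Ne.symm hyM.1) hxyne)
              · exact hxy (hcross x hxA y hyB)
            · rcases hyAB with hyA | hyB
              · exact hxy (hcross y hyA x hxB).symm
              · obtain ⟨a', ha'M, ha'A⟩ := hMA
                -- P4 : v₀ x a' y
                exact hfree.elim' (p4Emb v₀ x a' y hx ((hcross a' ha'A x hxB).symm)
                  (hcross a' ha'A y hyB) ha'M.2 hyM.2 hxy
                  (Ne.symm ha'M.1) (Ne.symm hyM.1) hxyne)
        · -- M ∩ B = ∅ : B ⊆ N, partition (B, Bᶜ)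
          left
          have hBN : ∀ b ∈ B, G.Adj v₀ b := by
            intro b hb
            by_contra hnb
            exact hMB ⟨b, ⟨fun h => hv₀B (h ▸ hb), hnb⟩, hb⟩
          refine ⟨B, Bᶜ, hB, ⟨v₀, hv₀B⟩, disjoint_compl_right, Set.union_compl_self B, ?_⟩
          intro b hb y hy
          by_cases hyv : y = v₀
          · exact hyv ▸ (hBN b hb).symm
          · rcases hmemAB y hyv with hyA | hyB
            · exact (hcross y hyA b hb).symm
            · exact absurd hyB hy
      · -- M ∩ A = ∅ : A ⊆ N, partition (A, Aᶜ)
        left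
        have hAN : ∀ a ∈ A, G.Adj v₀ a := by
          intro a ha
          by_contra hna
          exact hMA ⟨a, ⟨fun h => hv₀A (h ▸ ha), hna⟩, ha⟩
        refine ⟨A, Aᶜ, hA, ⟨v₀, hv₀A⟩, disjoint_compl_right, Set.union_compl_self A, ?_⟩
        intro a ha y hy
        by_cases hyv : y = v₀
        · exact hyv ▸ (hAN a ha).symm
        · rcases hmemAB y hyv with hyA | hyB
          · exact absurd hyA hy
          · exact hcross a ha y hyB
    · -- N empty : v₀ isolated, Gᶜ is a join
      right
      refine ⟨{v₀}, {v₀}ᶜ, ⟨v₀, rfl⟩, ⟨hA.choose, fun h => hv₀A (h ▸ hA.choose_spec)⟩,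
        disjoint_compl_right, Set.union_compl_self _, ?_⟩
      rintro a rfl b hb
      refine ⟨(by rintro rfl; exact hb rfl), fun hadj => hNne ⟨b, hadj⟩⟩
  · -- M empty : v₀ adjacent to everything else, G is a join
    left
    refine ⟨{v₀}, {v₀}ᶜ, ⟨v₀, rfl⟩, ⟨hA.choose, fun h => hv₀A (h ▸ hA.choose_spec)⟩,
      disjoint_compl_right, Set.union_compl_self _, ?_⟩
    rintro a rfl b hb
    by_contra hnadj
    exact hMne ⟨b, (by rintro rfl; exact hb rfl), hnadj⟩

universe u

theorem mainJoin (n : ℕ) : ∀ (V : Type u) [Fintype V] (G : SimpleGraph V),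
    IsEmpty (pathGraph 4 ↪g G) → Fintype.card V = n → 2 ≤ n →
    IsJoinGraph G ∨ IsJoinGraph Gᶜ := by
  induction n using Nat.strong_induction_on with
  | _ n ih =>
  intro V _ G hfree hcard hn2
  classical
  rcases eq_or_lt_of_le hn2 with h2 | h3
  · -- base case : n = 2
    have hc2 : Nat.card V = 2 := by rw [Nat.card_eq_fintype_card, hcard, ← h2]
    obtain ⟨x, y, hxy, hU⟩ := Nat.card_eq_two_iff.mp hc2
    by_cases hadj : G.Adj x y
    · left
      refine ⟨{x}, {y}, ⟨x, rfl⟩, ⟨y, rfl⟩, by simp [hxy], ?_, ?_⟩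
      · rw [Set.singleton_union]; exact hU
      · intro a ha b hb
        rw [Set.mem_singleton_iff] at ha hb
        rw [ha, hb]; exact hadj
    · right
      refine ⟨{x}, {y}, ⟨x, rfl⟩, ⟨y, rfl⟩, by simp [hxy], ?_, ?_⟩
      · rw [Set.singleton_union]; exact hU
      · intro a ha b hb
        rw [Set.mem_singleton_iff] at ha hb
        rw [ha, hb]; exact ⟨hxy, hadj⟩
  · -- inductive step : n ≥ 3
    have hV : Nonempty V := by rw [← Fintype.card_pos_iff, hcard]; omega
    obtain ⟨v₀⟩ := hV
    set s : Set V := {x | x ≠ v₀} with hs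
    have hcs : Fintype.card s = n - 1 := by
      have h1 : Fintype.card s = Fintype.card {x // ¬ (x = v₀)} :=
        Fintype.card_congr (Equiv.subtypeEquivRight (fun _ => Iff.rfl))
      rw [h1, Fintype.card_subtype_compl, Fintype.card_subtype_eq, hcard]
    have hfree' : IsEmpty (pathGraph 4 ↪g G.induce s) :=
      ⟨fun f => hfree.elim' ((SimpleGraph.Embedding.induce s).comp f)⟩
    have hrange : Subtype.val '' (Set.univ : Set s) = ({v₀}ᶜ : Set V) := by
      rw [Set.image_univ, Subtype.range_coe]
      ext x; simp [hs]
    rcases ih (n-1) (by omega) s (G.induce s) hfree' hcs (by omega) with hJ | hJ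
    · obtain ⟨A', B', hA', hB', hd', hU', hcr'⟩ := hJ
      refine lemA hfree v₀ (Subtype.val '' A') (Subtype.val '' B')
        (hA'.image _) (hB'.image _) ?_ ?_
      · rw [← Set.image_union, hU', hrange]
      · rintro a ⟨a', ha', rfl⟩ b ⟨b', hb', rfl⟩
        exact hcr' a' ha' b' hb'
    · obtain ⟨A', B', hA', hB', hd', hU', hcr'⟩ := hJ
      have h := lemA (compl_p4free hfree) v₀ (Subtype.val '' A') (Subtype.val '' B')
        (hA'.image _) (hB'.image _) ?_ ?_
      · rcases h with h | h
        · exact Or.inr h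
        · left; rwa [compl_compl] at h
      · rw [← Set.image_union, hU', hrange]
      · rintro a ⟨a', ha', rfl⟩ b ⟨b', hb', rfl⟩
        have h2 := hcr' a' ha' b' hb'
        exact ⟨fun hh => h2.1 (Subtype.val_injective hh), h2.2⟩

/-- Every connected `P₄`-free graph on at least two vertices has a spanning complete
bipartite subgraph: its vertex set can be partitioned into two nonempty sets `A` and `B`
such that every vertex of `A` is adjacent to every vertex of `B`. -/
theorem stmt_0 {V : Type*} [Fintype V] (G : SimpleGraph V)
    (hconn : G.Connected)
    (hfree : IsEmpty (pathGraph 4 ↪g G))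
    (hcard : 2 ≤ Fintype.card V) :
    ∃ A B : Set V, A.Nonempty ∧ B.Nonempty ∧ Disjoint A B ∧ A ∪ B = Set.univ ∧
      ∀ a ∈ A, ∀ b ∈ B, G.Adj a b := by
  classical
  rcases mainJoin (Fintype.card V) V G hfree rfl hcard with hJ | hJ
  · exact hJ
  · exfalso
    obtain ⟨A, B, ⟨a, ha⟩, ⟨b, hb⟩, hd, hU, hcr⟩ := hJ
    have stay : ∀ {x y : V} (_ : G.Walk x y), x ∈ A → y ∈ A := by
      intro x y w
      induction w with
      | nil => exact id
      | cons h p ih =>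
        rename_i u v _
        intro hx
        apply ih
        have hm : v ∈ A ∪ B := by rw [hU]; trivial
        rcases hm with h1 | h1
        · exact h1
        · exact absurd h (hcr u hx v h1).2
    obtain ⟨w⟩ := hconn.preconnected a b
    exact (Set.disjoint_left.mp hd (stay w ha)) hb
end

section
/- Let G be a connected P4-free graph with at least two vertices and let Z be an independent set of vertices of G. Then there exists a vertex u not in Z that is adjacent to every vertex of Z. -/
/-!
Choose `u ∉ Z` with as many neighbours in `Z` as possible. If `u` missed some `z ∈ Z`, then,
since a connected `P₄`-free graph has diameter at most two, `u` and `z` would have a common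
neighbour `w ∉ Z`. Every neighbour `y ∈ Z` of `u` is adjacent to `w`, for otherwise
`y - u - w - z` is an induced `P₄`; so `w` has strictly more neighbours in `Z` than `u`.
-/

open SimpleGraph

namespace SimpleGraph

variable {V : Type*} {G : SimpleGraph V}

def IsP4Free (G : SimpleGraph V) : Prop :=
  IsEmpty (pathGraph 4 ↪g G)

namespace IsP4Free

lemma adj_of_adj_adj_adj (hfree : G.IsP4Free) {a b c d : V} (hab : G.Adj a b) (hbc : G.Adj b c)
    (hcd : G.Adj c d) (hac : ¬ G.Adj a c) (hbd : ¬ G.Adj b d) : G.Adj a d := by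
  by_contra had
  have hinj : Function.Injective ![a, b, c, d] := by
    simp only [Matrix.vecCons, Fin.cons_injective_iff, Set.mem_range, Fin.exists_fin_succ,
      Matrix.vecEmpty, Fin.cons_zero, Fin.cons_succ, IsEmpty.exists_iff, or_false, not_or]
    refine ⟨⟨?_, ?_, ?_⟩, ⟨?_, ?_⟩, ?_, not_false, fun i => Fin.elim0 i⟩
    all_goals rintro rfl; simp_all [G.adj_comm]
  refine hfree.elim ⟨⟨_, hinj⟩, fun {i j} => ?_⟩
  fin_cases i <;> fin_cases j <;> simp [pathGraph_adj, G.adj_comm, *]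

lemma exists_adj_adj_of_reachable (hfree : G.IsP4Free) {x y : V} (h : G.Reachable x y)
    (hne : x ≠ y) (hxy : ¬ G.Adj x y) : ∃ w, G.Adj x w ∧ G.Adj w y := by
  obtain ⟨p⟩ := h
  induction p with
  | nil => exact absurd rfl hne
  | @cons x a y hxa q ih =>
    by_cases hay : a = y
    · exact absurd (hay ▸ hxa) hxy
    by_cases hay' : G.Adj a y
    · exact ⟨a, hxa, hay'⟩
    obtain ⟨b, hab, hby⟩ := ih hay hay'
    by_cases hxb : G.Adj x b
    · exact ⟨b, hxb, hby⟩
    · exact absurd (hfree.adj_of_adj_adj_adj hxa hab hby hxb hay') hxy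

lemma neighborSet_inter_ssubset (hfree : G.IsP4Free) {Z : Set V} (hZ : G.IsIndepSet Z)
    {u w z : V} (hz : z ∈ Z) (huw : G.Adj u w) (hwz : G.Adj w z) (huz : ¬ G.Adj u z) :
    G.neighborSet u ∩ Z ⊂ G.neighborSet w ∩ Z := by
  refine ⟨fun y ⟨huy, hy⟩ => ⟨?_, hy⟩, fun hsub => huz (hsub ⟨hwz, hz⟩).1⟩
  have hyz : ¬ G.Adj y z := hZ hy hz (by rintro rfl; exact huz huy)
  by_contra hwy
  exact hyz (hfree.adj_of_adj_adj_adj huy.symm huw hwz (hwy ·.symm) huz)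

end IsP4Free

lemma Connected.exists_notMem_of_isIndepSet [Nontrivial V] (hconn : G.Connected) {Z : Set V}
    (hZ : G.IsIndepSet Z) : ∃ u, u ∉ Z := by
  obtain ⟨v⟩ := hconn.nonempty
  obtain ⟨u, hvu⟩ := hconn.preconnected.exists_adj_of_nontrivial v
  by_cases hv : v ∈ Z
  · exact ⟨u, fun hu => hZ hv hu hvu.ne hvu⟩
  · exact ⟨v, hv⟩

end SimpleGraph

/-- If `G` is a connected `P₄`-free graph with at least two vertices and `Z` is an
independent set of vertices of `G`, then there is a vertex `u ∉ Z` adjacent to every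
vertex of `Z`. -/
theorem stmt_1 {V : Type*} [Fintype V] (G : SimpleGraph V)
    (hconn : G.Connected)
    (hfree : IsEmpty (pathGraph 4 ↪g G))
    (hcard : 2 ≤ Fintype.card V)
    (Z : Set V) (hZ : Z.Pairwise fun a b => ¬ G.Adj a b) :
    ∃ u : V, u ∉ Z ∧ ∀ z ∈ Z, G.Adj u z := by
  have hfree : G.IsP4Free := hfree
  have : Nontrivial V := Fintype.one_lt_card_iff_nontrivial.mp hcard
  obtain ⟨u, hu, hmax⟩ := Set.exists_max_image {u | u ∉ Z}
    (fun u => (G.neighborSet u ∩ Z).ncard) (Set.toFinite _) (hconn.exists_notMem_of_isIndepSet hZ)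
  refine ⟨u, hu, fun z hz => by_contra fun huz => ?_⟩
  obtain ⟨w, huw, hwz⟩ :=
    hfree.exists_adj_adj_of_reachable (hconn u z) (by rintro rfl; exact hu hz) huz
  have hw : w ∉ Z := fun hw => hZ hw hz hwz.ne hwz
  exact (Set.ncard_lt_ncard (hfree.neighborSet_inter_ssubset hZ hz huw hwz huz)).not_ge
    (hmax w hw)
end

section
/- Let G be a connected graph and let W be a nonempty dominating set of G such that the subgraph of G induced by W has exactly c connected components. Then G has a connected dominating set W' with W ⊆ W' and |W'| ≤ |W| + 2(c−1). -/
open SimpleGraph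


private lemma card_plus_one_le_of_surj_not_inj {α β : Type*} [Finite α] {f : α → β}
    (hs : Function.Surjective f) {x y : α} (hxy : x ≠ y) (hf : f x = f y) :
    Nat.card β + 1 ≤ Nat.card α := by
  classical
  have : Finite β := Finite.of_surjective f hs
  have hg : Function.Surjective (fun z : {z : α // z ≠ x} => f z.1) := by
    intro b
    obtain ⟨z, rfl⟩ := hs b
    by_cases hz : z = x
    · exact ⟨⟨y, hxy.symm⟩, by simp [hz, hf.symm]⟩
    · exact ⟨⟨z, hz⟩, rfl⟩
  have h1 : Nat.card β ≤ Nat.card {z : α // z ≠ x} := Nat.card_le_card_of_surjective _ hg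
  cases nonempty_fintype α
  have h2 : Nat.card {z : α // z ≠ x} + 1 = Nat.card α := by
    rw [Nat.card_eq_fintype_card, Nat.card_eq_fintype_card]
    rw [Fintype.card_subtype_compl (p := fun z => z = x), Fintype.card_subtype_eq]
    have hpos : 1 ≤ Fintype.card α := Fintype.card_pos_iff.mpr ⟨x⟩
    omega
  omega

private lemma find_bridge {V : Type*} (G : SimpleGraph V) (W : Set V)
    (hdom' : ∀ z : V, ∃ w : W, (z = ↑w ∨ G.Adj z ↑w)) :
    ∀ {x y : V} (_ : G.Walk x y) (u v : W),
      ((x : V) = ↑u ∨ G.Adj x ↑u) → ((y : V) = ↑v ∨ G.Adj y ↑v) →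
      (G.induce W).connectedComponentMk u ≠ (G.induce W).connectedComponentMk v →
      ∃ (u' v' : W) (a b : V),
        (G.induce W).connectedComponentMk u' ≠ (G.induce W).connectedComponentMk v' ∧
        (a = ↑u' ∨ G.Adj a ↑u') ∧ (a = b ∨ G.Adj a b) ∧ (b = ↑v' ∨ G.Adj b ↑v') := by
  intro x y p
  induction p with
  | nil => intro u v hu hv hne; exact ⟨u, v, _, _, hne, hu, Or.inl rfl, hv⟩
  | @cons x z y h p ih =>
      intro u v hu hv hne
      obtain ⟨w, hw⟩ := hdom' z
      by_cases hcase : (G.induce W).connectedComponentMk u = (G.induce W).connectedComponentMk w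
      · exact ih w v hw hv (by rw [← hcase]; exact hne)
      · exact ⟨u, w, x, z, hcase, hu, Or.inr h, hw⟩

private lemma step_lemma {V : Type*} [Fintype V] (G : SimpleGraph V) (hconn : G.Connected)
    (W : Set V) (hdom : ∀ v : V, v ∈ W ∨ ∃ w ∈ W, G.Adj v w)
    (h2 : 2 ≤ Nat.card (G.induce W).ConnectedComponent) :
    ∃ W' : Set V, W ⊆ W' ∧ W'.ncard ≤ W.ncard + 2 ∧
      Nat.card (G.induce W').ConnectedComponent + 1 ≤ Nat.card (G.induce W).ConnectedComponent := by
  classical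
  have hdom' : ∀ z : V, ∃ w : W, (z = ↑w ∨ G.Adj z ↑w) := fun z => by
    rcases hdom z with hz | ⟨w, hw, hadj⟩
    · exact ⟨⟨z, hz⟩, Or.inl rfl⟩
    · exact ⟨⟨w, hw⟩, Or.inr hadj⟩
  -- find two vertices of W in distinct components
  have hnt : Nontrivial (G.induce W).ConnectedComponent :=
    Finite.one_lt_card_iff_nontrivial.mp (by omega)
  obtain ⟨C, D, hCD⟩ := hnt
  obtain ⟨xx, rfl⟩ := C.exists_rep
  obtain ⟨yy, rfl⟩ := D.exists_rep
  -- a walk between them in G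
  obtain ⟨p⟩ := hconn.preconnected (xx : V) (yy : V)
  obtain ⟨u, v, a, b, hne, hau, hab, hbv⟩ :=
    find_bridge G W hdom' p xx yy (Or.inl rfl) (Or.inl rfl) hCD
  refine ⟨insert a (insert b W), ?_, ?_, ?_⟩
  · intro z hz; exact Set.mem_insert_of_mem _ (Set.mem_insert_of_mem _ hz)
  · calc (insert a (insert b W)).ncard ≤ (insert b W).ncard + 1 :=
          Set.ncard_insert_le _ _
      _ ≤ W.ncard + 1 + 1 := by
          have := Set.ncard_insert_le b W; omega
      _ = W.ncard + 2 := by ring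
  · -- component count decreases
    set W' : Set V := insert a (insert b W) with hW'
    have hsub : W ⊆ W' := fun z hz => Set.mem_insert_of_mem _ (Set.mem_insert_of_mem _ hz)
    have haW' : a ∈ W' := Set.mem_insert _ _
    have hbW' : b ∈ W' := Set.mem_insert_of_mem _ (Set.mem_insert _ _)
    let ι : G.induce W →g G.induce W' :=
      ⟨fun z => ⟨z.1, hsub z.2⟩, fun {p q} h => h⟩
    let φ := ConnectedComponent.map ι
    have reach_aux : ∀ (p q : V) (hp : p ∈ W') (hq : q ∈ W'),
        (p = q ∨ G.Adj p q) → (G.induce W').Reachable ⟨p, hp⟩ ⟨q, hq⟩ := by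
      rintro p q hp hq (rfl | h)
      · exact Reachable.refl _
      · exact SimpleGraph.Adj.reachable (by simpa using h)
    have hsurj : Function.Surjective φ := by
      intro D
      obtain ⟨⟨z, hz⟩, rfl⟩ := D.exists_rep
      rcases hz with rfl | hz
      · -- z = a : connect to u
        refine ⟨(G.induce W).connectedComponentMk u, ?_⟩
        have : (G.induce W').Reachable ⟨(u : V), hsub u.2⟩ ⟨z, haW'⟩ :=
          (reach_aux z u haW' (hsub u.2) (by simpa using hau)).symm
        exact (ConnectedComponent.map_mk ι u).trans (ConnectedComponent.sound this)
      · rcases hz with rfl | hz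
        · -- z = b : connect to v
          refine ⟨(G.induce W).connectedComponentMk v, ?_⟩
          have : (G.induce W').Reachable ⟨(v : V), hsub v.2⟩ ⟨z, hbW'⟩ :=
            (reach_aux z v hbW' (hsub v.2) (by simpa using hbv)).symm
          exact (ConnectedComponent.map_mk ι v).trans (ConnectedComponent.sound this)
        · exact ⟨(G.induce W).connectedComponentMk ⟨z, hz⟩, ConnectedComponent.map_mk ι ⟨z, hz⟩⟩
    have hmerge : φ ((G.induce W).connectedComponentMk u)
        = φ ((G.induce W).connectedComponentMk v) := by
      have r1 : (G.induce W').Reachable ⟨(u : V), hsub u.2⟩ ⟨a, haW'⟩ :=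
        (reach_aux a u haW' (hsub u.2) hau).symm
      have r2 : (G.induce W').Reachable ⟨a, haW'⟩ ⟨b, hbW'⟩ :=
        reach_aux a b haW' hbW' hab
      have r3 : (G.induce W').Reachable ⟨b, hbW'⟩ ⟨(v : V), hsub v.2⟩ :=
        reach_aux b v hbW' (hsub v.2) hbv
      have := ConnectedComponent.sound ((r1.trans r2).trans r3)
      calc φ ((G.induce W).connectedComponentMk u)
          = (G.induce W').connectedComponentMk (ι u) := ConnectedComponent.map_mk ι u
        _ = (G.induce W').connectedComponentMk (ι v) := this
        _ = φ ((G.induce W).connectedComponentMk v) := (ConnectedComponent.map_mk ι v).symm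
    exact card_plus_one_le_of_surj_not_inj hsurj hne hmerge

private lemma main_aux {V : Type*} [Fintype V] (G : SimpleGraph V) (hconn : G.Connected) :
    ∀ (c : ℕ) (W : Set V), W.Nonempty →
      (∀ v : V, v ∈ W ∨ ∃ w ∈ W, G.Adj v w) →
      Nat.card (G.induce W).ConnectedComponent = c →
      ∃ W' : Set V, W ⊆ W' ∧ (G.induce W').Connected ∧
        (∀ v : V, v ∈ W' ∨ ∃ w ∈ W', G.Adj v w) ∧
        W'.ncard ≤ W.ncard + 2 * (c - 1) := by
  intro c
  induction c using Nat.strong_induction_on with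
  | _ c ih =>
    intro W hWne hdom hc
    have hne : Nonempty ↥W := hWne.to_subtype
    have hcomp_ne : Nonempty (G.induce W).ConnectedComponent :=
      ⟨(G.induce W).connectedComponentMk hne.some⟩
    have hpos : 1 ≤ c := hc ▸ Nat.card_pos
    by_cases hc1 : c = 1
    · -- already connected
      subst hc1
      have hss : Subsingleton (G.induce W).ConnectedComponent ∧ Nonempty _ :=
        Nat.card_eq_one_iff_unique.mp hc
      refine ⟨W, subset_rfl, Connected.mk (fun x y => ?_), hdom, by omega⟩
      exact (SimpleGraph.ConnectedComponent.eq).mp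
        (hss.1.elim ((G.induce W).connectedComponentMk x) ((G.induce W).connectedComponentMk y))
    · -- merge step
      have h2 : 2 ≤ Nat.card (G.induce W).ConnectedComponent := by omega
      obtain ⟨W₂, hsub₂, hcard₂, hcomp₂⟩ := step_lemma G hconn W hdom h2
      set c₂ := Nat.card (G.induce W₂).ConnectedComponent with hc₂
      have hW₂ne : W₂.Nonempty := hWne.mono hsub₂
      have hdom₂ : ∀ v : V, v ∈ W₂ ∨ ∃ w ∈ W₂, G.Adj v w := fun v => by
        rcases hdom v with hv | ⟨w, hw, hadj⟩
        · exact Or.inl (hsub₂ hv)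
        · exact Or.inr ⟨w, hsub₂ hw, hadj⟩
      have : Nonempty (G.induce W₂).ConnectedComponent :=
        ⟨(G.induce W₂).connectedComponentMk hW₂ne.to_subtype.some⟩
      have hc₂pos : 1 ≤ c₂ := Nat.card_pos (α := (G.induce W₂).ConnectedComponent)
      have hlt : c₂ < c := by omega
      obtain ⟨W', hsub', hconn', hdom', hcard'⟩ := ih c₂ hlt W₂ hW₂ne hdom₂ rfl
      refine ⟨W', hsub₂.trans hsub', hconn', hdom', ?_⟩
      rw [hc] at hcomp₂
      omega


/-- If `G` is connected and `W` is a nonempty dominating set of `G` whose induced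
subgraph has exactly `c` connected components, then `G` has a connected dominating set
`W'` with `W ⊆ W'` and `|W'| ≤ |W| + 2(c-1)`. -/
theorem stmt_3 {V : Type*} [Fintype V] (G : SimpleGraph V) (hconn : G.Connected)
    (W : Set V) (hWne : W.Nonempty)
    (hdom : ∀ v : V, v ∈ W ∨ ∃ w ∈ W, G.Adj v w)
    (c : ℕ) (hc : Nat.card (G.induce W).ConnectedComponent = c) :
    ∃ W' : Set V, W ⊆ W' ∧ (G.induce W').Connected ∧
      (∀ v : V, v ∈ W' ∨ ∃ w ∈ W', G.Adj v w) ∧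
      W'.ncard ≤ W.ncard + 2 * (c - 1) := by
  exact main_aux G hconn c W hWne hdom hc
end

section
/- Let G be a P4-free graph and let Z_1, …, Z_k be pairwise disjoint independent sets of vertices of G, each of size at least 2. Then there exist pairwise disjoint sets S_1, …, S_k of vertices with Z_i ⊆ S_i and the subgraph induced by S_i connected for every i, if and only if there exist k distinct vertices y_1, …, y_k, none of which belongs to Z_1 ∪ … ∪ Z_k, such that y_i is adjacent to every vertex of Z_i for every i. -/
open SimpleGraph

lemma embP4 {V : Type*} (G : SimpleGraph V) (a b c d : V)
    (hab : G.Adj a b) (hbc : G.Adj b c) (hcd : G.Adj c d)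
    (hac : ¬ G.Adj a c) (had : ¬ G.Adj a d) (hbd : ¬ G.Adj b d)
    (h1 : a ≠ c) (h2 : a ≠ d) (h3 : b ≠ d) :
    Nonempty (pathGraph 4 ↪g G) := by
  have hab' := hab.ne
  have hbc' := hbc.ne
  have hcd' := hcd.ne
  refine ⟨⟨⟨![a,b,c,d], ?_⟩, ?_⟩⟩
  · intro i j hij
    fin_cases i <;> fin_cases j <;> simp_all [Matrix.cons_val_zero, Matrix.cons_val_one]
  · intro i j
    have hba := hab.symm
    have hcb := hbc.symm
    have hdc := hcd.symm
    have hca : ¬ G.Adj c a := fun h => hac h.symm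
    have hda : ¬ G.Adj d a := fun h => had h.symm
    have hdb : ¬ G.Adj d b := fun h => hbd h.symm
    fin_cases i <;> fin_cases j <;>
      simp [pathGraph_adj, G.irrefl] <;> tauto

lemma common_nbr {V : Type*} (G : SimpleGraph V) (hfree : IsEmpty (pathGraph 4 ↪g G))
    (S : Set V) {a b : S} (h : (G.induce S).Reachable a b)
    (hne : (a : V) ≠ b) (hnadj : ¬ G.Adj a b) : ∃ w : S, G.Adj a w ∧ G.Adj (w : V) b := by
  obtain ⟨p⟩ := h
  induction p with
  | nil => exact absurd rfl hne
  | @cons u v x h q ih =>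
    have hav : G.Adj u v := h
    by_cases hvb : (v : V) = x
    · exact absurd (hvb ▸ hav) hnadj
    by_cases hvb2 : G.Adj (v : V) x
    · exact ⟨v, hav, hvb2⟩
    · obtain ⟨w, hvw, hwb⟩ := ih hvb hvb2
      by_cases haw : G.Adj (u : V) w
      · exact ⟨w, haw, hwb⟩
      · have hne2 : (u : V) ≠ w := fun e => hnadj (e ▸ hwb)
        exact absurd (embP4 G u v w x hav hvw hwb haw hnadj hvb2 hne2 hne hvb) (not_nonempty_iff.mpr hfree)

lemma star_lemma {V : Type*} [Fintype V] (G : SimpleGraph V)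
    (hfree : IsEmpty (pathGraph 4 ↪g G)) (S Z : Set V) (hZS : Z ⊆ S)
    (hconn : (G.induce S).Connected) (hindep : Z.Pairwise fun a b => ¬ G.Adj a b)
    (hcard : 2 ≤ Z.ncard) :
    ∃ y ∈ S, y ∉ Z ∧ ∀ z ∈ Z, G.Adj y z := by
  classical
  set f : V → ℕ := fun v => {z ∈ Z | G.Adj v z}.ncard with hf
  -- get two distinct elements of Z
  obtain ⟨z1, hz1, z2, hz2, hzz⟩ := (Set.one_lt_ncard (Set.toFinite Z)).mp (by omega)
  -- common neighbor of z1 z2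
  have hreach : (G.induce S).Reachable ⟨z1, hZS hz1⟩ ⟨z2, hZS hz2⟩ :=
    hconn.preconnected _ _
  obtain ⟨w0, hw01, hw02⟩ := common_nbr G hfree S hreach hzz (hindep hz1 hz2 hzz)
  -- maximizer
  obtain ⟨y, hyS, hymax⟩ := Set.exists_max_image S f (Set.toFinite S) ⟨z1, hZS hz1⟩
  have hfy : 1 ≤ f y := by
    have h1 : z1 ∈ {z ∈ Z | G.Adj (w0 : V) z} := ⟨hz1, hw01.symm⟩
    have : 1 ≤ f w0 := by
      rw [hf]
      exact (Set.ncard_pos (Set.toFinite _)).mpr ⟨z1, h1⟩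
    exact le_trans this (hymax _ w0.2)
  obtain ⟨a, ⟨haZ, hya⟩⟩ := Set.nonempty_of_ncard_ne_zero (s := {z ∈ Z | G.Adj y z})
    (Nat.one_le_iff_ne_zero.mp hfy)
  have hyZ : y ∉ Z := fun hy => hindep hy haZ hya.ne hya
  refine ⟨y, hyS, hyZ, fun b hbZ => ?_⟩
  by_contra hyb
  have hab : a ≠ b := fun e => hyb (e ▸ hya)
  have hanb : ¬ G.Adj a b := hindep haZ hbZ hab
  have hreach2 : (G.induce S).Reachable ⟨a, hZS haZ⟩ ⟨b, hZS hbZ⟩ := hconn.preconnected _ _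
  obtain ⟨w, haw, hwb⟩ := common_nbr G hfree S hreach2 hab hanb
  have hyw : G.Adj y (w : V) := by
    by_contra hyw
    have hne2 : y ≠ (w : V) := fun e => hyb (e ▸ hwb)
    exact absurd (embP4 G y a w b hya haw hwb hyw hyb hanb hne2 (fun e => hyZ (e ▸ hbZ)) hab)
      (not_nonempty_iff.mpr hfree)
  -- w beats y
  have hsub : {z ∈ Z | G.Adj y z} ⊆ {z ∈ Z | G.Adj (w : V) z} := by
    rintro c ⟨hcZ, hyc⟩
    refine ⟨hcZ, ?_⟩
    by_contra hwc
    have hcb : c ≠ b := fun e => hyb (e ▸ hyc)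
    have hcnb : ¬ G.Adj c b := hindep hcZ hbZ hcb
    exact absurd (embP4 G c y w b hyc.symm hyw hwb (fun h => hwc h.symm) hcnb hyb
      (fun e => hcnb (e ▸ hwb)) hcb (fun e => hyZ (e ▸ hbZ))) (not_nonempty_iff.mpr hfree)
  have hb : b ∈ {z ∈ Z | G.Adj (w : V) z} := ⟨hbZ, hwb⟩
  have hbn : b ∉ {z ∈ Z | G.Adj y z} := fun h => hyb h.2
  have : f y < f (w : V) := by
    rw [hf]
    exact Set.ncard_lt_ncard (Set.ssubset_iff_of_subset hsub |>.mpr ⟨b, hb, hbn⟩)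
      (Set.toFinite _)
  exact absurd (hymax _ w.2) (by omega)

lemma star_connected {V : Type*} (G : SimpleGraph V) (Z : Set V) (y : V)
    (h : ∀ z ∈ Z, G.Adj y z) : (G.induce (Z ∪ {y})).Connected := by
  have hy : y ∈ Z ∪ {y} := Or.inr rfl
  rw [connected_iff]
  refine ⟨?_, ⟨⟨y, hy⟩⟩⟩
  have key : ∀ u : (Z ∪ {y} : Set V), (G.induce (Z ∪ {y})).Reachable u ⟨y, hy⟩ := by
    rintro ⟨u, hu | hu⟩
    · exact Adj.reachable ((h u hu).symm : G.Adj u y)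
    · obtain rfl : u = y := hu
      exact Reachable.refl _
  intro u v
  exact (key u).trans (key v).symm

/-- Let `G` be `P₄`-free and `Z₁, …, Z_k` pairwise disjoint independent sets, each of
size at least 2. Then there are pairwise disjoint connected sets `S₁, …, S_k` with
`Z i ⊆ S i` iff there are `k` distinct vertices `y₁, …, y_k` outside `Z₁ ∪ … ∪ Z_k`
such that `y i` is adjacent to every vertex of `Z i`. -/
theorem stmt_5 {V : Type*} [Fintype V] (G : SimpleGraph V)
    (hfree : IsEmpty (pathGraph 4 ↪g G))
    (k : ℕ) (Z : Fin k → Set V)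
    (hdisj : Pairwise fun i j => Disjoint (Z i) (Z j))
    (hindep : ∀ i, (Z i).Pairwise fun a b => ¬ G.Adj a b)
    (hsize : ∀ i, 2 ≤ (Z i).ncard) :
    (∃ S : Fin k → Set V, (Pairwise fun i j => Disjoint (S i) (S j)) ∧
        ∀ i, Z i ⊆ S i ∧ (G.induce (S i)).Connected) ↔
      (∃ y : Fin k → V, Function.Injective y ∧ (∀ i j, y i ∉ Z j) ∧
        ∀ i, ∀ z ∈ Z i, G.Adj (y i) z) := by
  constructor
  · rintro ⟨S, hSdisj, hS⟩
    have h := fun i => star_lemma G hfree (S i) (Z i) (hS i).1 (hS i).2 (hindep i) (hsize i)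
    choose y hyS hyZ hadj using h
    refine ⟨y, ?_, ?_, hadj⟩
    · intro i j e
      by_contra hij
      exact Set.disjoint_left.mp (hSdisj hij) (hyS i) (e ▸ hyS j)
    · intro i j
      by_cases hij : i = j
      · exact hij ▸ hyZ i
      · exact fun hmem => Set.disjoint_left.mp (hSdisj hij) (hyS i) ((hS j).1 hmem)
  · rintro ⟨y, hinj, hyZ, hadj⟩
    refine ⟨fun i => Z i ∪ {y i}, ?_, fun i => ⟨Set.subset_union_left,
      star_connected G (Z i) (y i) (hadj i)⟩⟩
    intro i j hij
    rw [Set.disjoint_left]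
    rintro x (hx | hx) (hx' | hx')
    · exact Set.disjoint_left.mp (hdisj hij) hx hx'
    · exact hyZ j i ((show x = y j from hx') ▸ hx)
    · exact hyZ i j ((show x = y i from hx) ▸ hx')
    · exact hij (hinj ((show x = y i from hx) ▸ (show x = y j from hx')))
end

section
/- Let G be a graph whose vertex set is partitioned into two sets C and I such that C is a clique and every vertex of I is non-adjacent to at most one other vertex of I (the non-edges inside I form a matching); the edges between C and I are arbitrary. Then G is 4P_1-free (G has no independent set of size 4) and (P_1 + P_4)-free. -/
open SimpleGraph

/-- Let the vertex set of `G` be partitioned into a clique `C` and a set `I` in which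
every vertex is non-adjacent to at most one other vertex of `I`.  Then `G` is `4P₁`-free
(no independent set of size 4) and `(P₁ + P₄)`-free. -/
theorem stmt_6 {V : Type*} [Fintype V] (G : SimpleGraph V) (C I : Set V)
    (hpart : C ∪ I = Set.univ) (hdisj : Disjoint C I)
    (hC : G.IsClique C)
    (hI : ∀ v ∈ I, {w | w ∈ I ∧ w ≠ v ∧ ¬ G.Adj v w}.Subsingleton) :
    IsEmpty ((⊥ : SimpleGraph (Fin 4)) ↪g G) ∧
      IsEmpty ((((⊥ : SimpleGraph (Fin 1)) ⊕g pathGraph 4)) ↪g G) := by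
  have mem : ∀ x : V, x ∈ C ∨ x ∈ I := by
    intro x
    have hx : x ∈ C ∪ I := hpart ▸ Set.mem_univ x
    exact hx
  have tripleI : ∀ v ∈ I, ∀ w1 ∈ I, ∀ w2 ∈ I, w1 ≠ v → w2 ≠ v → w1 ≠ w2 →
      ¬G.Adj v w1 → ¬G.Adj v w2 → False := by
    intro v hv w1 h1 w2 h2 hn1 hn2 hn12 ha1 ha2
    exact hn12 (hI v hv ⟨h1, hn1, ha1⟩ ⟨h2, hn2, ha2⟩)
  constructor
  · constructor
    intro f
    have hne : ∀ i j : Fin 4, i ≠ j → f i ≠ f j :=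
      fun i j h e => h (f.injective e)
    have hna : ∀ i j : Fin 4, ¬G.Adj (f i) (f j) := by
      intro i j h
      rw [f.map_adj_iff] at h
      exact h.elim
    rcases mem (f 0) with h0 | h0 <;> rcases mem (f 1) with h1 | h1 <;>
      rcases mem (f 2) with h2 | h2 <;> rcases mem (f 3) with h3 | h3 <;>
      first
      | exact hna 0 1 (hC h0 h1 (hne 0 1 (by decide)))
      | exact hna 0 2 (hC h0 h2 (hne 0 2 (by decide)))
      | exact hna 0 3 (hC h0 h3 (hne 0 3 (by decide)))
      | exact hna 1 2 (hC h1 h2 (hne 1 2 (by decide)))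
      | exact hna 1 3 (hC h1 h3 (hne 1 3 (by decide)))
      | exact hna 2 3 (hC h2 h3 (hne 2 3 (by decide)))
      | exact tripleI (f 0) h0 (f 1) h1 (f 2) h2 (hne 1 0 (by decide))
          (hne 2 0 (by decide)) (hne 1 2 (by decide)) (hna 0 1) (hna 0 2)
      | exact tripleI (f 0) h0 (f 1) h1 (f 3) h3 (hne 1 0 (by decide))
          (hne 3 0 (by decide)) (hne 1 3 (by decide)) (hna 0 1) (hna 0 3)
      | exact tripleI (f 0) h0 (f 2) h2 (f 3) h3 (hne 2 0 (by decide))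
          (hne 3 0 (by decide)) (hne 2 3 (by decide)) (hna 0 2) (hna 0 3)
      | exact tripleI (f 1) h1 (f 2) h2 (f 3) h3 (hne 2 1 (by decide))
          (hne 3 1 (by decide)) (hne 2 3 (by decide)) (hna 1 2) (hna 1 3)
  · constructor
    intro f
    set a : V := f (Sum.inl 0) with ha
    set b : Fin 4 → V := fun i => f (Sum.inr i) with hb
    have hnab : ∀ i : Fin 4, ¬G.Adj a (b i) := by
      intro i h
      rw [ha, hb, f.map_adj_iff] at h
      simp [SimpleGraph.sum_adj] at h
    have hneab : ∀ i : Fin 4, a ≠ b i := by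
      intro i e
      exact absurd (f.injective e) (by simp)
    have hnebb : ∀ i j : Fin 4, i ≠ j → b i ≠ b j := by
      intro i j h e
      exact h (by simpa using f.injective e)
    have hnabb : ∀ i j : Fin 4, ¬(pathGraph 4).Adj i j → ¬G.Adj (b i) (b j) := by
      intro i j hp h
      rw [hb, f.map_adj_iff] at h
      simp only [SimpleGraph.sum_adj] at h
      exact hp h
    have hp02 : ¬(pathGraph 4).Adj 0 2 := by rw [pathGraph_adj]; decide
    have hp03 : ¬(pathGraph 4).Adj 0 3 := by rw [pathGraph_adj]; decide
    have hp13 : ¬(pathGraph 4).Adj 1 3 := by rw [pathGraph_adj]; decide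
    rcases mem a with hA | hA
    · -- a ∈ C, so all b i ∈ I (else adjacent to a via clique)
      have hbI : ∀ i : Fin 4, b i ∈ I := by
        intro i
        rcases mem (b i) with h | h
        · exact absurd (hC hA h (hneab i)) (hnab i)
        · exact h
      exact tripleI (b 0) (hbI 0) (b 2) (hbI 2) (b 3) (hbI 3)
        (hnebb 2 0 (by decide)) (hnebb 3 0 (by decide)) (hnebb 2 3 (by decide))
        (hnabb 0 2 hp02) (hnabb 0 3 hp03)
    · -- a ∈ I : at most one b i in I
      have hbc : ∀ i j : Fin 4, i ≠ j → b i ∈ I → b j ∈ I → False := by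
        intro i j hij hi hj
        exact tripleI a hA (b i) hi (b j) hj (fun e => hneab i e.symm)
          (fun e => hneab j e.symm) (hnebb i j hij) (hnab i) (hnab j)
      -- so at least three of b 0, b 1, b 2, b 3 are in C, contradiction
      rcases mem (b 0) with c0 | c0 <;> rcases mem (b 1) with c1 | c1 <;>
        rcases mem (b 2) with c2 | c2 <;> rcases mem (b 3) with c3 | c3 <;>
        first
        | exact hnabb 0 2 hp02 (hC c0 c2 (hnebb 0 2 (by decide)))
        | exact hnabb 0 3 hp03 (hC c0 c3 (hnebb 0 3 (by decide)))
        | exact hnabb 1 3 hp13 (hC c1 c3 (hnebb 1 3 (by decide)))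
        | exact hbc 0 1 (by decide) c0 c1
        | exact hbc 0 2 (by decide) c0 c2
        | exact hbc 0 3 (by decide) c0 c3
        | exact hbc 1 2 (by decide) c1 c2
        | exact hbc 1 3 (by decide) c1 c3
        | exact hbc 2 3 (by decide) c2 c3
end

section
/- Let G and G' be graphs on the same vertex set with E(G) ⊆ E(G'), and let (s_1,t_1), …, (s_k,t_k) be terminal pairs with all 2k terminal vertices distinct. Suppose every edge in E(G') \ E(G) joins two terminal vertices belonging to two distinct pairs (in particular, no such edge is of the form s_i t_i). Then G has pairwise vertex-disjoint paths P^1, …, P^k with P^i an s_i–t_i path if and only if G' has such paths. -/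
open SimpleGraph

/-- A solution of Disjoint Paths: pairwise vertex-disjoint paths `P¹, …, Pᵏ` such that
`Pⁱ` is an `s i`–`t i` path. -/
def HasDisjointPaths {V : Type*} (G : SimpleGraph V) {k : ℕ} (s t : Fin k → V) : Prop :=
  ∃ P : (i : Fin k) → G.Walk (s i) (t i),
    (∀ i, (P i).IsPath) ∧
      Pairwise fun i j => ((P i).support).Disjoint ((P j).support)

/-- Adding edges only between terminal vertices belonging to distinct terminal pairs
does not change the feasibility of a Disjoint Paths instance. -/
theorem stmt_7 {V : Type*} [Fintype V] (G G' : SimpleGraph V) (hle : G ≤ G')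
    (k : ℕ) (s t : Fin k → V)
    (hinj : Function.Injective (Sum.elim s t))
    (hextra : ∀ x y : V, G'.Adj x y → ¬ G.Adj x y →
      ∃ i j : Fin k, i ≠ j ∧ (x = s i ∨ x = t i) ∧ (y = s j ∨ y = t j)) :
    HasDisjointPaths G s t ↔ HasDisjointPaths G' s t := by
  constructor
  · rintro ⟨P, hpath, hdisj⟩
    refine ⟨fun i => (P i).transfer G' (fun e he => edgeSet_mono hle ((P i).edges_subset_edgeSet he)),
      fun i => (hpath i).transfer _, ?_⟩
    intro i j hij
    simpa [Walk.support_transfer] using hdisj hij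
  · rintro ⟨P, hpath, hdisj⟩
    -- every edge of each path is an edge of G
    have hedges : ∀ i : Fin k, ∀ e ∈ (P i).edges, e ∈ G.edgeSet := by
      intro i e he
      induction e with
      | h x y =>
        have hadj : G'.Adj x y := (P i).edges_subset_edgeSet he
        by_contra hG
        obtain ⟨a, b, hab, hx, hy⟩ := hextra x y hadj hG
        have hxs : x ∈ (P i).support := Walk.fst_mem_support_of_mem_edges _ he
        have hys : y ∈ (P i).support := Walk.snd_mem_support_of_mem_edges _ he
        have hxa : x ∈ (P a).support := by
          rcases hx with h | h <;> subst h
          · exact Walk.start_mem_support _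
          · exact Walk.end_mem_support _
        have hyb : y ∈ (P b).support := by
          rcases hy with h | h <;> subst h
          · exact Walk.start_mem_support _
          · exact Walk.end_mem_support _
        have hia : i = a := by
          by_contra h
          exact hdisj h hxs hxa
        have hib : i = b := by
          by_contra h
          exact hdisj h hys hyb
        exact hab (hia ▸ hib)
    refine ⟨fun i => (P i).transfer G (hedges i), fun i => (hpath i).transfer _, ?_⟩
    intro i j hij
    simpa [Walk.support_transfer] using hdisj hij
end

section
/- H-free graphs are closed under edge contraction when H is a linear forest: let H be a linear forest, let G be an H-free graph, and let uv be an edge of G. Then the contraction G/uv is H-free. -/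
open SimpleGraph

/-- The contraction `G/uv`: the graph on `V(G) \ {v}` in which distinct `x, y` are
adjacent iff `xy ∈ E(G)`, or `x = u` and `vy ∈ E(G)`, or `y = u` and `vx ∈ E(G)`. -/
def contractEdge {V : Type*} (G : SimpleGraph V) (u v : V) :
    SimpleGraph {x : V // x ≠ v} :=
  SimpleGraph.fromRel fun x y =>
    G.Adj x y ∨ ((x : V) = u ∧ G.Adj v y) ∨ ((y : V) = u ∧ G.Adj v x)

/-- A graph is a path graph if it is isomorphic to `P_n` for some `n`. -/
def IsPathGraph {W : Type*} (H : SimpleGraph W) : Prop :=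
  ∃ n : ℕ, Nonempty (H ≃g pathGraph n)

/-- A linear forest is a graph every connected component of which is a path. -/
def IsLinearForest {W : Type*} (H : SimpleGraph W) : Prop :=
  ∀ c : H.ConnectedComponent, IsPathGraph (H.induce c.supp)

section Helpers

variable {W V : Type*} {H : SimpleGraph W} {G : SimpleGraph V} {u v : V}
  {c : H.ConnectedComponent} {n : ℕ}


lemma contract_adj_iff (x y : {x : V // x ≠ v}) :
    (contractEdge G u v).Adj x y ↔ (x : V) ≠ (y : V) ∧
      (G.Adj x y ∨ ((x : V) = u ∧ G.Adj v y) ∨ ((y : V) = u ∧ G.Adj v x)) := by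
  unfold contractEdge
  rw [fromRel_adj]
  constructor
  · rintro ⟨hne, h | h⟩
    · exact ⟨Subtype.coe_ne_coe.mpr hne, h⟩
    · refine ⟨Subtype.coe_ne_coe.mpr hne, ?_⟩
      rcases h with h | ⟨h1, h2⟩ | ⟨h1, h2⟩
      · exact Or.inl h.symm
      · exact Or.inr (Or.inr ⟨h1, h2⟩)
      · exact Or.inr (Or.inl ⟨h1, h2⟩)
  · rintro ⟨hne, h⟩
    exact ⟨fun he => hne (congrArg _ he), Or.inl h⟩

lemma contract_adj_of_ne {x y : {x : V // x ≠ v}} (hx : (x : V) ≠ u) (hy : (y : V) ≠ u) :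
    (contractEdge G u v).Adj x y ↔ G.Adj x y := by
  rw [contract_adj_iff]
  constructor
  · rintro ⟨hne, h | ⟨h1, _⟩ | ⟨h1, _⟩⟩
    · exact h
    · exact absurd h1 hx
    · exact absurd h1 hy
  · intro h
    exact ⟨h.ne, Or.inl h⟩

lemma contract_adj_u {x y : {x : V // x ≠ v}} (hx : (x : V) = u) (hy : (y : V) ≠ u) :
    (contractEdge G u v).Adj x y ↔ (G.Adj u y ∨ G.Adj v y) := by
  rw [contract_adj_iff, hx]
  constructor
  · rintro ⟨hne, h | ⟨_, h2⟩ | ⟨h1, _⟩⟩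
    · exact Or.inl h
    · exact Or.inr h2
    · exact absurd h1 hy
  · rintro (h | h)
    · exact ⟨fun he => hy he.symm, Or.inl h⟩
    · exact ⟨fun he => hy he.symm, Or.inr (Or.inl ⟨rfl, h⟩)⟩

lemma mem_supp_of_adj {W : Type*} {H : SimpleGraph W} {c : H.ConnectedComponent} {x y : W}
    (hx : x ∈ c.supp) (h : H.Adj x y) : y ∈ c.supp := by
  rw [ConnectedComponent.mem_supp_iff] at *
  rw [← hx]
  exact ConnectedComponent.sound h.symm.reachable

def pathGraphRev (n : ℕ) : pathGraph n ≃g pathGraph n where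
  toEquiv := Fin.revPerm
  map_rel_iff' := by
    intro a b
    simp only [Fin.revPerm_apply, pathGraph_adj, Fin.val_rev]
    have := a.isLt; have := b.isLt
    omega

def Pmap (e : (H.induce c.supp) ≃g pathGraph n) (j : Fin n) : W :=
  ((e.symm j : c.supp) : W)
def Fmap (f : H ↪g contractEdge G u v) (e : (H.induce c.supp) ≃g pathGraph n)
    (t : ℕ) (j : Fin n) : V :=
  if (j : ℕ) ≤ t then (f (Pmap e j) : V)
  else if (j : ℕ) = t + 1 then v
  else (f (Pmap e ⟨(j : ℕ) - 1, Nat.lt_of_le_of_lt (Nat.sub_le _ _) j.isLt⟩) : V)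
open Classical in
noncomputable def gmap (f : H ↪g contractEdge G u v)
    (e : (H.induce c.supp) ≃g pathGraph n) (t : ℕ) (w : W) : V :=
  if h : w ∈ c.supp then Fmap f e t (e ⟨w, h⟩) else (f w : V)
lemma Pmap_e (e : (H.induce c.supp) ≃g pathGraph n) (x : c.supp) :
    Pmap e (e x) = (x : W) := by simp [Pmap]
lemma Pmap_mem (e : (H.induce c.supp) ≃g pathGraph n) (j : Fin n) :
    Pmap e j ∈ c.supp := (e.symm j).2
lemma Pmap_inj (e : (H.induce c.supp) ≃g pathGraph n) : Function.Injective (Pmap e) :=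
  fun _ _ h => e.symm.injective (Subtype.ext h)
lemma Pmap_adj (e : (H.induce c.supp) ≃g pathGraph n) (j j' : Fin n) :
    H.Adj (Pmap e j) (Pmap e j') ↔ ((j : ℕ) + 1 = (j' : ℕ) ∨ (j' : ℕ) + 1 = (j : ℕ)) := by
  have h1 : H.Adj (Pmap e j) (Pmap e j') ↔ (H.induce c.supp).Adj (e.symm j) (e.symm j') := by
    simp [Pmap, comap_adj]
  rw [h1, e.symm.map_adj_iff, pathGraph_adj]

lemma mixed_case (huv : G.Adj u v) (f : H ↪g contractEdge G u v)
    (e : (H.induce c.supp) ≃g pathGraph n)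
    {w₀ a b : W} (hw : w₀ ∈ c.supp) (ha : a ∈ c.supp) (hb : b ∈ c.supp)
    (hw₀ : ((f w₀ : V)) = u)
    (hva : G.Adj v (f a)) (hua : ¬ G.Adj u (f a))
    (hub : G.Adj u (f b)) (hvb : ¬ G.Adj v (f b))
    (hea : ((e ⟨a, ha⟩ : Fin n) : ℕ) = ((e ⟨w₀, hw⟩ : Fin n) : ℕ) + 1)
    (heb : ((e ⟨b, hb⟩ : Fin n) : ℕ) + 1 = ((e ⟨w₀, hw⟩ : Fin n) : ℕ)) :
    Nonempty (H ↪g G) := by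
  set t : ℕ := ((e ⟨w₀, hw⟩ : Fin n) : ℕ) with hts
  set P : Fin n → W := Pmap e with hP
  set F : Fin n → V := Fmap f e t with hF
  set g : W → V := gmap f e t with hg
  have ht1 : t + 1 < n := hea ▸ (e ⟨a, ha⟩).isLt
  have ht0 : 1 ≤ t := by omega
  -- index identifications
  have Pt : P ⟨t, by omega⟩ = w₀ := by
    have : (⟨t, by omega⟩ : Fin n) = e ⟨w₀, hw⟩ := Fin.eq_of_val_eq rfl
    rw [this, hP, Pmap_e]
  have Pa : P ⟨t + 1, ht1⟩ = a := by
    have : (⟨t + 1, ht1⟩ : Fin n) = e ⟨a, ha⟩ := Fin.eq_of_val_eq hea.symm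
    rw [this, hP, Pmap_e]
  have Pb : P ⟨t - 1, by omega⟩ = b := by
    have : (⟨t - 1, by omega⟩ : Fin n) = e ⟨b, hb⟩ := Fin.eq_of_val_eq (by
      show t - 1 = ((e ⟨b, hb⟩ : Fin n) : ℕ); omega)
    rw [this, hP, Pmap_e]
  -- transfer lemmas
  have fne : ∀ {x : W}, x ≠ w₀ → ((f x : V)) ≠ u := by
    intro x hx he
    exact hx (f.injective (Subtype.ext (he.trans hw₀.symm)))
  have T1 : ∀ {x y : W}, x ≠ w₀ → y ≠ w₀ → (G.Adj (f x) (f y) ↔ H.Adj x y) :=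
    fun hx hy => (contract_adj_of_ne (fne hx) (fne hy)).symm.trans f.map_rel_iff
  have T2 : ∀ {y : W}, y ≠ w₀ → ((G.Adj u (f y) ∨ G.Adj v (f y)) ↔ H.Adj w₀ y) := by
    intro y hy
    have := (contract_adj_u (x := f w₀) (y := f y) hw₀ (fne hy)).symm.trans
      (f.map_rel_iff (a := w₀) (b := y))
    exact this
  -- non-w₀ness of P
  have Pne : ∀ (j : Fin n), (j : ℕ) ≠ t → P j ≠ w₀ := by
    intro j hj he
    have h1 : e.symm j = ⟨w₀, hw⟩ := Subtype.ext he
    have h2 : j = e ⟨w₀, hw⟩ := by rw [← h1, RelIso.apply_symm_apply]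
    exact hj (by rw [h2])
  have F1 : ∀ (j : Fin n), (j : ℕ) ≤ t → F j = (f (P j) : V) := by
    intro j hj
    rw [hF]
    unfold Fmap
    rw [if_pos hj, ← hP]
  have F2 : ∀ (j : Fin n), (j : ℕ) = t + 1 → F j = v := by
    intro j hj
    rw [hF]
    unfold Fmap
    rw [if_neg (by omega), if_pos hj]
  have F3 : ∀ (j : Fin n) (hj : t + 2 ≤ (j : ℕ)) (k : (j : ℕ) - 1 < n),
      F j = (f (P ⟨(j : ℕ) - 1, k⟩) : V) := by
    intro j hj k
    rw [hF]
    unfold Fmap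
    rw [if_neg (by omega), if_neg (by omega), ← hP]
  have PA : ∀ (j j' : Fin n), H.Adj (P j) (P j') ↔ ((j : ℕ) + 1 = (j' : ℕ) ∨ (j' : ℕ) + 1 = (j : ℕ)) := by
    intro j j'
    rw [hP]
    exact Pmap_adj e j j'
  have Pmem : ∀ (j : Fin n), P j ∈ c.supp := by
    intro j
    rw [hP]
    exact Pmap_mem e j
  have T2n : ∀ {y : W}, y ≠ w₀ → ¬H.Adj w₀ y → ¬G.Adj u (f y) ∧ ¬G.Adj v (f y) := by
    intro y hy hn
    constructor <;> intro h <;> exact hn ((T2 hy).mp (by tauto))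
  have nadj : ∀ (j : Fin n), (j : ℕ) + 1 ≠ t → t + 1 ≠ (j : ℕ) → ¬H.Adj w₀ (P j) := by
    intro j h1 h2 hadj
    rw [← Pt] at hadj
    have h3 := (PA _ _).mp hadj
    simp only [Fin.val_mk] at h3
    omega
  have FAdj' : ∀ (j j' : Fin n), (j : ℕ) < (j' : ℕ) →
      (G.Adj (F j) (F j') ↔ (j : ℕ) + 1 = (j' : ℕ)) := by
    intro j j' hlt
    by_cases hj' : (j' : ℕ) ≤ t
    · rw [F1 j (by omega), F1 j' hj']
      by_cases hj't : (j' : ℕ) = t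
      · have hPj' : P j' = w₀ := by
          have hjj : j' = ⟨t, by omega⟩ := Fin.eq_of_val_eq hj't
          rw [hjj, Pt]
        have hPj : P j ≠ w₀ := Pne j (by omega)
        rw [hPj', hw₀]
        constructor
        · intro hGA
          have hH : H.Adj w₀ (P j) := (T2 hPj).mp (Or.inl hGA.symm)
          rw [← Pt] at hH
          have h4 := (PA _ _).mp hH
          simp only [Fin.val_mk] at h4
          omega
        · intro h1
          have hjj : j = ⟨t - 1, by omega⟩ := Fin.eq_of_val_eq ((by omega : (j : ℕ) = t - 1))
          rw [hjj, Pb]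
          exact hub.symm
      · rw [T1 (Pne j (by omega)) (Pne j' (by omega)), PA]
        omega
    · by_cases hj'2 : (j' : ℕ) = t + 1
      · rw [F2 j' hj'2, F1 j (by omega)]
        by_cases hjt : (j : ℕ) = t
        · have hjj : j = ⟨t, by omega⟩ := Fin.eq_of_val_eq hjt
          rw [hjj, Pt, hw₀]
          exact ⟨fun _ => by omega, fun _ => huv⟩
        · have hPj : P j ≠ w₀ := Pne j hjt
          constructor
          · intro hGA
            exfalso
            by_cases hjb : (j : ℕ) = t - 1
            · have hjj : j = ⟨t - 1, by omega⟩ := Fin.eq_of_val_eq hjb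
              rw [hjj, Pb] at hGA
              exact hvb hGA.symm
            · exact (T2n hPj (nadj j (by omega) (by omega))).2 hGA.symm
          · intro h
            omega
      · have hj'3 : t + 2 ≤ (j' : ℕ) := by omega
        have k : (j' : ℕ) - 1 < n := by omega
        rw [F3 j' hj'3 k]
        have hne2 : P ⟨(j' : ℕ) - 1, k⟩ ≠ w₀ := Pne _ ((by omega : (j' : ℕ) - 1 ≠ t))
        by_cases hjt : (j : ℕ) ≤ t
        · rw [F1 j hjt]
          by_cases hjt' : (j : ℕ) = t
          · have hjj : j = ⟨t, by omega⟩ := Fin.eq_of_val_eq hjt'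
            rw [hjj, Pt, hw₀]
            constructor
            · intro hGA
              exfalso
              by_cases hja : (j' : ℕ) - 1 = t + 1
              · have h5 : (⟨(j' : ℕ) - 1, k⟩ : Fin n) = ⟨t + 1, ht1⟩ := Fin.eq_of_val_eq hja
                rw [h5, Pa] at hGA
                exact hua hGA
              · exact (T2n hne2 (nadj _ ((by omega : (j' : ℕ) - 1 + 1 ≠ t))
                  ((by omega : t + 1 ≠ (j' : ℕ) - 1)))).1 hGA
            · intro h
              omega
          · rw [T1 (Pne j (by omega)) hne2, PA]
            simp only [Fin.val_mk]
            omega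
        · by_cases hj2 : (j : ℕ) = t + 1
          · rw [F2 j hj2]
            constructor
            · intro hGA
              by_cases hja : (j' : ℕ) - 1 = t + 1
              · omega
              · exfalso
                exact (T2n hne2 (nadj _ ((by omega : (j' : ℕ) - 1 + 1 ≠ t))
                  ((by omega : t + 1 ≠ (j' : ℕ) - 1)))).2 hGA
            · intro h
              have h5 : (⟨(j' : ℕ) - 1, k⟩ : Fin n) = ⟨t + 1, ht1⟩ :=
                Fin.eq_of_val_eq ((by omega : (j' : ℕ) - 1 = t + 1))
              rw [h5, Pa]
              exact hva
          · have hj3 : t + 2 ≤ (j : ℕ) := by omega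
            have kj : (j : ℕ) - 1 < n := by omega
            rw [F3 j hj3 kj]
            rw [T1 (Pne _ ((by omega : (j : ℕ) - 1 ≠ t))) hne2, PA]
            simp only [Fin.val_mk]
            omega
  have Pinj : ∀ (j j' : Fin n), P j = P j' → j = j' := by
    intro j j' h
    rw [hP] at h
    exact Pmap_inj e h
  have FAdj : ∀ (j j' : Fin n), G.Adj (F j) (F j') ↔
      ((j : ℕ) + 1 = (j' : ℕ) ∨ (j' : ℕ) + 1 = (j : ℕ)) := by
    intro j j'
    rcases lt_trichotomy (j : ℕ) (j' : ℕ) with h | h | h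
    · rw [FAdj' j j' h]
      omega
    · have hjj : j = j' := Fin.eq_of_val_eq h
      subst hjj
      constructor
      · intro hx
        exact (G.irrefl hx).elim
      · intro hx
        exfalso
        omega
    · rw [G.adj_comm, FAdj' j' j h]
      omega
  have Finj : Function.Injective F := by
    have key : ∀ (j j' : Fin n), (j : ℕ) < (j' : ℕ) → F j ≠ F j' := by
      intro j j' hlt hEq
      by_cases hj' : (j' : ℕ) ≤ t
      · rw [F1 j (by omega), F1 j' hj'] at hEq
        have h2 := Pinj _ _ (f.injective (Subtype.ext hEq))
        have h3 := congrArg Fin.val h2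
        omega
      · by_cases hj'2 : (j' : ℕ) = t + 1
        · rw [F2 j' hj'2, F1 j (by omega)] at hEq
          exact (f _).2 hEq
        · rw [F3 j' (by omega) (Nat.lt_of_le_of_lt (Nat.sub_le _ _) j'.isLt)] at hEq
          by_cases hjt : (j : ℕ) ≤ t
          · rw [F1 j hjt] at hEq
            have h2 := congrArg Fin.val (Pinj _ _ (f.injective (Subtype.ext hEq)))
            simp only [Fin.val_mk] at h2
            omega
          · by_cases hj2 : (j : ℕ) = t + 1
            · rw [F2 j hj2] at hEq
              exact (f _).2 hEq.symm
            · rw [F3 j (by omega) (Nat.lt_of_le_of_lt (Nat.sub_le _ _) j.isLt)] at hEq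
              have h2 := congrArg Fin.val (Pinj _ _ (f.injective (Subtype.ext hEq)))
              simp only [Fin.val_mk] at h2
              omega
    intro j j' hEq
    rcases lt_trichotomy (j : ℕ) (j' : ℕ) with h | h | h
    · exact absurd hEq (key j j' h)
    · exact Fin.eq_of_val_eq h
    · exact absurd hEq.symm (key j' j h)
  have g1 : ∀ (w : W) (h : w ∈ c.supp), g w = F (e ⟨w, h⟩) := by
    intro w h
    rw [hg]
    unfold gmap
    rw [dif_pos h, ← hF]
  have g2 : ∀ (w : W), w ∉ c.supp → g w = (f w : V) := by
    intro w h
    rw [hg]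
    unfold gmap
    rw [dif_neg h]
  have FP : ∀ (j j' : Fin n), G.Adj (F j) (F j') ↔ H.Adj (P j) (P j') :=
    fun j j' => (FAdj j j').trans (PA j j').symm
  have mixed : ∀ (w w' : W) (h : w ∈ c.supp), w' ∉ c.supp → ¬G.Adj (g w) (g w') := by
    intro w w' h h' hGA
    rw [g1 w h, g2 w' h'] at hGA
    set j := e ⟨w, h⟩ with hj
    have hw2 : w' ≠ w₀ := fun hh => h' (hh ▸ hw)
    by_cases hjt : (j : ℕ) ≤ t
    · rw [F1 j hjt] at hGA
      by_cases hjt' : (j : ℕ) = t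
      · have hjj : j = ⟨t, by omega⟩ := Fin.eq_of_val_eq hjt'
        rw [hjj, Pt, hw₀] at hGA
        exact (T2n hw2 (fun ha => h' (mem_supp_of_adj hw ha))).1 hGA
      · have hnot : ¬H.Adj (P j) w' := fun ha => h' (mem_supp_of_adj (Pmem j) ha)
        exact hnot ((T1 (Pne j hjt') hw2).mp hGA)
    · by_cases hj2 : (j : ℕ) = t + 1
      · rw [F2 j hj2] at hGA
        exact (T2n hw2 (fun ha => h' (mem_supp_of_adj hw ha))).2 hGA
      · rw [F3 j (by omega) (Nat.lt_of_le_of_lt (Nat.sub_le _ _) j.isLt)] at hGA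
        have hnot : ¬H.Adj (P ⟨(j : ℕ) - 1, Nat.lt_of_le_of_lt (Nat.sub_le _ _) j.isLt⟩) w' :=
          fun ha => h' (mem_supp_of_adj (Pmem _) ha)
        exact hnot ((T1 (Pne _ ((by omega : (j : ℕ) - 1 ≠ t))) hw2).mp hGA)
  have gAdj : ∀ (w w' : W), G.Adj (g w) (g w') ↔ H.Adj w w' := by
    intro w w'
    by_cases h : w ∈ c.supp <;> by_cases h' : w' ∈ c.supp
    · rw [g1 w h, g1 w' h', FP]
      rw [hP, Pmap_e, Pmap_e]
    · constructor
      · intro hGA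
        exact absurd hGA (mixed w w' h h')
      · intro hadj
        exact absurd (mem_supp_of_adj h hadj) h'
    · rw [G.adj_comm, H.adj_comm]
      constructor
      · intro hGA
        exact absurd hGA (mixed w' w h' h)
      · intro hadj
        exact absurd (mem_supp_of_adj h' hadj) h
    · rw [g2 w h, g2 w' h']
      exact T1 (fun hh => h (hh ▸ hw)) (fun hh => h' (hh ▸ hw))
  have gne : ∀ (w w' : W), w ∈ c.supp → w' ∉ c.supp → g w ≠ g w' := by
    intro w w' h h' hEq
    rw [g1 w h, g2 w' h'] at hEq
    set j := e ⟨w, h⟩ with hj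
    by_cases hjt : (j : ℕ) ≤ t
    · rw [F1 j hjt] at hEq
      exact h' ((f.injective (Subtype.ext hEq)) ▸ Pmem j)
    · by_cases hj2 : (j : ℕ) = t + 1
      · rw [F2 j hj2] at hEq
        exact (f w').2 hEq.symm
      · rw [F3 j (by omega) (Nat.lt_of_le_of_lt (Nat.sub_le _ _) j.isLt)] at hEq
        exact h' ((f.injective (Subtype.ext hEq)) ▸ Pmem _)
  have ginj : Function.Injective g := by
    intro w w' hEq
    by_cases h : w ∈ c.supp <;> by_cases h' : w' ∈ c.supp
    · rw [g1 w h, g1 w' h'] at hEq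
      exact congrArg Subtype.val (e.injective (Finj hEq))
    · exact absurd hEq (gne w w' h h')
    · exact absurd hEq.symm (gne w' w h' h)
    · rw [g2 w h, g2 w' h'] at hEq
      exact f.injective (Subtype.ext hEq)
  exact ⟨⟨⟨g, ginj⟩, fun {a b} => gAdj a b⟩⟩

end Helpers

/-- If `H` is a linear forest and `G` is `H`-free, then the contraction `G/uv` is
`H`-free. -/
theorem stmt_9 {W V : Type*} [Fintype W] [Fintype V] (H : SimpleGraph W)
    (hH : IsLinearForest H) (G : SimpleGraph V) (hfree : IsEmpty (H ↪g G))
    (u v : V) (huv : G.Adj u v) :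
    IsEmpty (H ↪g contractEdge G u v) := by
  constructor
  intro f
  classical
  suffices hne : Nonempty (H ↪g G) by exact hfree.false hne.some
  have fne : ∀ {w₀ x : W}, ((f w₀ : V)) = u → x ≠ w₀ → ((f x : V)) ≠ u := by
    intro w₀ x hw₀ hx he
    exact hx (f.injective (Subtype.ext (he.trans hw₀.symm)))
  by_cases hcase : ∀ (w x : W), ((f w : V)) = u → H.Adj w x → G.Adj u (f x)
  · -- identity embedding works
    refine ⟨⟨⟨fun w => (f w : V), fun w w' h => f.injective (Subtype.ext h)⟩, ?_⟩⟩
    intro w w'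
    show G.Adj (f w) (f w') ↔ H.Adj w w'
    constructor
    · intro hGA
      exact f.map_rel_iff.mp ((contract_adj_iff _ _).mpr ⟨hGA.ne, Or.inl hGA⟩)
    · intro hadj
      rcases ((contract_adj_iff _ _).mp (f.map_rel_iff.mpr hadj)).2 with h | ⟨h1, _⟩ | ⟨h1, _⟩
      · exact h
      · rw [h1]
        exact hcase w w' h1 hadj
      · rw [h1]
        exact (hcase w' w h1 hadj.symm).symm
  · push_neg at hcase
    obtain ⟨w₀, a, hw₀, haw, hua⟩ := hcase
    have hane : a ≠ w₀ := by
      rintro rfl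
      exact H.irrefl haw
    have hva : G.Adj v (f a) :=
      (((contract_adj_u hw₀ (fne hw₀ hane)).mp (f.map_rel_iff.mpr haw))).resolve_left hua
    by_cases hcase2 : ∀ (x : W), H.Adj w₀ x → G.Adj v (f x)
    · -- map w₀ to v, everything else identically
      have hside : ∀ (w' : W), w' ≠ w₀ → (G.Adj v (f w') ↔ H.Adj w₀ w') := by
        intro w' hne
        constructor
        · intro hGA
          exact f.map_rel_iff.mp ((contract_adj_u hw₀ (fne hw₀ hne)).mpr (Or.inr hGA))
        · intro hadj
          exact hcase2 w' hadj
      refine ⟨⟨⟨fun w => if w = w₀ then v else (f w : V), ?_⟩, ?_⟩⟩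
      · intro w w' h
        dsimp only at h
        by_cases hw : w = w₀ <;> by_cases hw' : w' = w₀
        · rw [hw, hw']
        · rw [if_pos hw, if_neg hw'] at h
          exact absurd h.symm (f w').2
        · rw [if_neg hw, if_pos hw'] at h
          exact absurd h (f w).2
        · rw [if_neg hw, if_neg hw'] at h
          exact f.injective (Subtype.ext h)
      · intro w w'
        show G.Adj (if w = w₀ then v else (f w : V)) (if w' = w₀ then v else (f w' : V)) ↔ H.Adj w w'
        by_cases hw : w = w₀ <;> by_cases hw' : w' = w₀
        · subst hw; subst hw'
          rw [if_pos rfl]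
          constructor
          · intro h
            exact (G.irrefl h).elim
          · intro h
            exact (H.irrefl h).elim
        · subst hw
          rw [if_pos rfl, if_neg hw']
          exact hside w' hw'
        · subst hw'
          rw [if_pos rfl, if_neg hw, G.adj_comm, H.adj_comm]
          exact hside w hw
        · rw [if_neg hw, if_neg hw']
          exact (contract_adj_of_ne (fne hw₀ hw) (fne hw₀ hw')).symm.trans f.map_rel_iff
    · push_neg at hcase2
      obtain ⟨b, hbw, hvb⟩ := hcase2
      have hbne : b ≠ w₀ := by
        rintro rfl
        exact H.irrefl hbw
      have hub : G.Adj u (f b) :=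
        ((contract_adj_u hw₀ (fne hw₀ hbne)).mp (f.map_rel_iff.mpr hbw)).resolve_right hvb
      set c := H.connectedComponentMk w₀ with hc
      have hw : w₀ ∈ c.supp := by rw [ConnectedComponent.mem_supp_iff]
      have ha : a ∈ c.supp := mem_supp_of_adj hw haw
      have hb : b ∈ c.supp := mem_supp_of_adj hw hbw
      obtain ⟨n, ⟨e⟩⟩ := hH c
      have hadjA : ((e ⟨w₀, hw⟩ : Fin n) : ℕ) + 1 = ((e ⟨a, ha⟩ : Fin n) : ℕ) ∨
          ((e ⟨a, ha⟩ : Fin n) : ℕ) + 1 = ((e ⟨w₀, hw⟩ : Fin n) : ℕ) := by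
        rw [← pathGraph_adj, e.map_adj_iff]
        exact haw
      have hadjB : ((e ⟨w₀, hw⟩ : Fin n) : ℕ) + 1 = ((e ⟨b, hb⟩ : Fin n) : ℕ) ∨
          ((e ⟨b, hb⟩ : Fin n) : ℕ) + 1 = ((e ⟨w₀, hw⟩ : Fin n) : ℕ) := by
        rw [← pathGraph_adj, e.map_adj_iff]
        exact hbw
      have hab : ((e ⟨a, ha⟩ : Fin n) : ℕ) ≠ ((e ⟨b, hb⟩ : Fin n) : ℕ) := by
        intro h
        have h2 : (⟨a, ha⟩ : c.supp) = ⟨b, hb⟩ := e.injective (Fin.eq_of_val_eq h)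
        have h3 : a = b := congrArg Subtype.val h2
        rw [h3] at hua
        exact hua hub
      rcases hadjA with h1 | h1
      · rcases hadjB with h2 | h2
        · omega
        · exact mixed_case huv f e hw ha hb hw₀ hva hua hub hvb h1.symm h2
      · rcases hadjB with h2 | h2
        · -- reversed situation: compose with path reversal
          set e' := e.trans (pathGraphRev n) with he'
          have hval : ∀ (x : c.supp), ((e' x : Fin n) : ℕ) = n - ((e x : Fin n) : ℕ) - 1 := by
            intro x
            rw [he']
            show ((Fin.rev (e x) : Fin n) : ℕ) = _
            rw [Fin.val_rev]
            omega
          have hlta := (e ⟨a, ha⟩).isLt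
          have hltb := (e ⟨b, hb⟩).isLt
          have hltw := (e ⟨w₀, hw⟩).isLt
          refine mixed_case huv f e' hw ha hb hw₀ hva hua hub hvb ?_ ?_
          · rw [hval, hval]
            omega
          · rw [hval, hval]
            omega
        · omega
end

section
/- Contracting an edge inside a terminal set yields an equivalent Disjoint Connected Subgraphs instance: let G be a graph, let Z_1, …, Z_k be pairwise disjoint terminal sets of vertices of G, and let u, v be adjacent vertices with u, v ∈ Z_i for some i. Then (G, Z_1,…,Z_k) has a solution if and only if (G/uv, Z_1,…,Z_{i-1}, Z_i\{v}, Z_{i+1},…,Z_k) has a solution. -/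
open SimpleGraph

private lemma reach_map {A B : Type*} {G : SimpleGraph A} {H : SimpleGraph B} (f : A → B)
    (hmap : ∀ a b, G.Adj a b → H.Reachable (f a) (f b)) {a b : A}
    (h : G.Reachable a b) : H.Reachable (f a) (f b) := by
  obtain ⟨w⟩ := h
  induction w with
  | nil => exact Reachable.refl _
  | cons h p ih => exact (hmap _ _ h).trans ih

private lemma connected_of_map {A B : Type*} {G : SimpleGraph A} {H : SimpleGraph B}
    (f : A → B) (hmap : ∀ a b, G.Adj a b → H.Reachable (f a) (f b))
    (hcover : ∀ b, ∃ a, H.Reachable (f a) b) (hG : G.Connected) : H.Connected := by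
  haveI hne : Nonempty B := hG.nonempty.elim fun a => ⟨f a⟩
  refine ⟨fun x y => ?_⟩
  obtain ⟨a, ha⟩ := hcover x
  obtain ⟨b, hb⟩ := hcover y
  exact ha.symm.trans ((reach_map f hmap (hG a b)).trans hb)

/-- Contracting an edge `uv` inside a terminal set `Z i` yields an equivalent
Disjoint Connected Subgraphs instance: `(G, Z₁, …, Z_k)` has a solution iff
`(G/uv, Z₁, …, Z_{i-1}, Z_i \ {v}, Z_{i+1}, …, Z_k)` has a solution. -/
theorem stmt_10 {V : Type*} [Fintype V] (G : SimpleGraph V) (k : ℕ)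
    (Z : Fin k → Set V)
    (hdisj : Pairwise fun a b => Disjoint (Z a) (Z b))
    (u v : V) (huv : G.Adj u v) (i : Fin k) (hu : u ∈ Z i) (hv : v ∈ Z i) :
    (∃ S : Fin k → Set V, (Pairwise fun a b => Disjoint (S a) (S b)) ∧
        ∀ j, Z j ⊆ S j ∧ (G.induce (S j)).Connected) ↔
      (∃ S : Fin k → Set {x : V // x ≠ v},
        (Pairwise fun a b => Disjoint (S a) (S b)) ∧
        ∀ j, {x : {x : V // x ≠ v} | (x : V) ∈ Z j} ⊆ S j ∧
          ((contractEdge G u v).induce (S j)).Connected) := by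
  classical
  have hune : u ≠ v := huv.ne
  constructor
  · rintro ⟨S, hS, hsol⟩
    have huS : u ∈ S i := (hsol i).1 hu
    have hvS : v ∈ S i := (hsol i).1 hv
    refine ⟨fun j => {x | (x : V) ∈ S j}, ?_, fun j => ⟨fun x hx => (hsol j).1 hx, ?_⟩⟩
    · intro a b hab
      exact Set.disjoint_left.2 fun x hx hx' => Set.disjoint_left.1 (hS hab) hx hx'
    · by_cases hji : j = i
      · subst hji
        set T : Set {x : V // x ≠ v} := {x | (x : V) ∈ S j}
        have hum : (⟨u, hune⟩ : {x : V // x ≠ v}) ∈ T := huS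
        refine connected_of_map
          (G := G.induce (S j))
          (fun a : ↥(S j) =>
            if h : (a : V) = v then (⟨⟨u, hune⟩, hum⟩ : ↥T) else ⟨⟨(a : V), h⟩, a.2⟩)
          ?_ ?_ (hsol j).2
        · intro a b hab
          have hab' : G.Adj (a : V) (b : V) := hab
          by_cases ha : (a : V) = v
          · by_cases hb : (b : V) = v
            · exact absurd (ha.trans hb.symm) hab'.ne
            · by_cases hub : u = (b : V)
              · have : (⟨⟨u, hune⟩, hum⟩ : ↥T) = ⟨⟨(b : V), hb⟩, b.2⟩ :=
                  Subtype.ext (Subtype.ext hub)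
                simp only [dif_pos ha, dif_neg hb, this]
                exact Reachable.refl _
              · refine Adj.reachable ?_
                simp only [dif_pos ha, dif_neg hb]
                show (contractEdge G u v).Adj _ _
                rw [contractEdge, fromRel_adj]
                refine ⟨fun h => hub (congrArg Subtype.val h), Or.inl (Or.inr (Or.inl ⟨rfl, ha ▸ hab'⟩))⟩
          · by_cases hb : (b : V) = v
            · by_cases hub : u = (a : V)
              · have : (⟨⟨u, hune⟩, hum⟩ : ↥T) = ⟨⟨(a : V), ha⟩, a.2⟩ :=
                  Subtype.ext (Subtype.ext hub)
                simp only [dif_pos hb, dif_neg ha, this]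
                exact Reachable.refl _
              · refine (Adj.reachable ?_).symm
                simp only [dif_pos hb, dif_neg ha]
                show (contractEdge G u v).Adj _ _
                rw [contractEdge, fromRel_adj]
                refine ⟨fun h => hub (congrArg Subtype.val h), Or.inl (Or.inr (Or.inl ⟨rfl, hb ▸ hab'.symm⟩))⟩
            · refine Adj.reachable ?_
              simp only [dif_neg ha, dif_neg hb]
              show (contractEdge G u v).Adj _ _
              rw [contractEdge, fromRel_adj]
              exact ⟨fun h => hab'.ne (congrArg (fun t : {x : V // x ≠ v} => (t : V)) h), Or.inl (Or.inl hab')⟩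
        · intro b
          refine ⟨⟨((b : {x : V // x ≠ v}) : V), b.2⟩, ?_⟩
          have hbv : (((b : {x : V // x ≠ v}) : V)) ≠ v := (b : {x : V // x ≠ v}).2
          simp only [dif_neg hbv]
          exact Reachable.refl _
      · -- j ≠ i : every vertex of S j differs from v
        have hvn : ∀ x ∈ S j, x ≠ v := fun x hx hxe =>
          Set.disjoint_left.1 (hS hji) hx (hxe ▸ hvS)
        refine connected_of_map
          (G := G.induce (S j))
          (fun a : ↥(S j) => (⟨⟨(a : V), hvn _ a.2⟩, a.2⟩ : ↥{x : {x : V // x ≠ v} | (x : V) ∈ S j}))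
          ?_ ?_ (hsol j).2
        · intro a b hab
          have hab' : G.Adj (a : V) (b : V) := hab
          refine Adj.reachable ?_
          show (contractEdge G u v).Adj _ _
          rw [contractEdge, fromRel_adj]
          exact ⟨fun h => hab'.ne (congrArg (fun t : {x : V // x ≠ v} => (t : V)) h), Or.inl (Or.inl hab')⟩
        · intro b
          refine ⟨⟨((b : {x : V // x ≠ v}) : V), b.2⟩, ?_⟩
          exact Reachable.refl _
  · rintro ⟨S', hS', hsol'⟩
    have huS' : (⟨u, hune⟩ : {x : V // x ≠ v}) ∈ S' i := (hsol' i).1 hu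
    set S : Fin k → Set V :=
      fun j => if j = i then insert v (Subtype.val '' S' j) else Subtype.val '' S' j with hSdef
    have hmemS : ∀ j (x : {x : V // x ≠ v}), x ∈ S' j → (x : V) ∈ S j := by
      intro j x hx
      by_cases hji : j = i
      · simp only [hSdef, if_pos hji]
        exact Set.mem_insert_of_mem _ ⟨x, hx, rfl⟩
      · simp only [hSdef, if_neg hji]
        exact ⟨x, hx, rfl⟩
    have hvS : v ∈ S i := by simp [hSdef]
    refine ⟨S, ?_, fun j => ⟨?_, ?_⟩⟩
    · intro a b hab
      rw [Set.disjoint_left]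
      intro x hxa hxb
      have key : ∀ c d : Fin k, c ≠ d → x ∈ Subtype.val '' S' c → x ∈ Subtype.val '' S' d → False := by
        intro c d hcd ⟨y, hy, hye⟩ ⟨z, hz, hze⟩
        have : y = z := Subtype.ext (hye.trans hze.symm)
        exact Set.disjoint_left.1 (hS' hcd) hy (this ▸ hz)
      have hvim : ∀ c, x = v → x ∉ Subtype.val '' S' c := by
        rintro c rfl ⟨y, _, hye⟩
        exact y.2 hye
      by_cases hai : a = i <;> by_cases hbi : b = i
      · exact hab (hai.trans hbi.symm)
      · simp only [hSdef, if_pos hai, Set.mem_insert_iff] at hxa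
        simp only [hSdef, if_neg hbi] at hxb
        rcases hxa with rfl | hxa
        · exact hvim b rfl hxb
        · exact key a b hab hxa hxb
      · simp only [hSdef, if_neg hai] at hxa
        simp only [hSdef, if_pos hbi, Set.mem_insert_iff] at hxb
        rcases hxb with rfl | hxb
        · exact hvim a rfl hxa
        · exact key a b hab hxa hxb
      · simp only [hSdef, if_neg hai] at hxa
        simp only [hSdef, if_neg hbi] at hxb
        exact key a b hab hxa hxb
    · -- Z j ⊆ S j
      intro x hx
      by_cases hji : j = i
      · subst hji
        by_cases hxv : x = v
        · exact hxv ▸ hvS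
        · exact hmemS j ⟨x, hxv⟩ ((hsol' j).1 hx)
      · have hxv : x ≠ v := fun hxe =>
          Set.disjoint_left.1 (hdisj hji) hx (hxe ▸ hv)
        exact hmemS j ⟨x, hxv⟩ ((hsol' j).1 hx)
    · -- connectivity of G.induce (S j)
      by_cases hji : j = i
      · subst hji
        have hSj : S j = insert v (Subtype.val '' S' j) := if_pos rfl
        have humem : u ∈ S j := hmemS j ⟨u, hune⟩ huS'
        have hvmem : v ∈ S j := hSj ▸ Set.mem_insert _ _
        refine connected_of_map
          (G := (contractEdge G u v).induce (S' j))
          (fun x : ↥(S' j) => (⟨((x : {x : V // x ≠ v}) : V), hmemS j _ x.2⟩ : ↥(S j)))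
          ?_ ?_ (hsol' j).2
        · intro a b hab
          have hab' : (contractEdge G u v).Adj a b := hab
          rw [contractEdge, fromRel_adj] at hab'
          obtain ⟨hne, hrel⟩ := hab'
          have pathu : ∀ (x y : ↥(S j)), (x : V) = u → G.Adj v (y : V) →
              (G.induce (S j)).Reachable x y := by
            intro x y hxu hvy
            have h1 : (G.induce (S j)).Adj x ⟨v, hvmem⟩ := by
              have : G.Adj (x : V) v := hxu ▸ huv
              exact this
            have h2 : (G.induce (S j)).Adj ⟨v, hvmem⟩ y := hvy
            exact h1.reachable.trans h2.reachable
          rcases hrel with (h | ⟨hxu, hvy⟩ | ⟨hyu, hvx⟩) | (h | ⟨hyu, hvx⟩ | ⟨hxu, hvy⟩)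
          · exact (Adj.reachable (by exact h : (G.induce (S j)).Adj _ _))
          · exact pathu _ _ hxu hvy
          · exact (pathu _ _ hyu hvx).symm
          · exact (Adj.reachable (by exact h.symm : (G.induce (S j)).Adj _ _))
          · exact (pathu _ _ hyu hvx).symm
          · exact pathu _ _ hxu hvy
        · intro b
          by_cases hbv : (b : V) = v
          · refine ⟨⟨⟨u, hune⟩, huS'⟩, Adj.reachable ?_⟩
            show G.Adj _ _
            simpa [hbv] using huv
          · have hb : (b : V) ∈ insert v (Subtype.val '' S' j) := hSj ▸ b.2
            rcases Set.mem_insert_iff.1 hb with h | ⟨x, hx, hxe⟩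
            · exact absurd h hbv
            · refine ⟨⟨x, hx⟩, ?_⟩
              have he : (⟨(x : V), hmemS j ⟨x, x.2⟩ hx⟩ : ↥(S j)) = b := Subtype.ext hxe
              cases he
              exact Reachable.refl _
      · have hSj : S j = Subtype.val '' S' j := if_neg hji
        have hun : (⟨u, hune⟩ : {x : V // x ≠ v}) ∉ S' j := fun h =>
          Set.disjoint_left.1 (hS' hji) h huS'
        refine connected_of_map
          (G := (contractEdge G u v).induce (S' j))
          (fun x : ↥(S' j) => (⟨((x : {x : V // x ≠ v}) : V), hmemS j _ x.2⟩ : ↥(S j)))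
          ?_ ?_ (hsol' j).2
        · intro a b hab
          have hab' : (contractEdge G u v).Adj a b := hab
          rw [contractEdge, fromRel_adj] at hab'
          obtain ⟨hne, hrel⟩ := hab'
          have hau : ((a : {x : V // x ≠ v}) : V) ≠ u := fun h => by
            have : (a : {x : V // x ≠ v}) = ⟨u, hune⟩ := Subtype.ext h
            exact hun (this ▸ a.2)
          have hbu : ((b : {x : V // x ≠ v}) : V) ≠ u := fun h => by
            have : (b : {x : V // x ≠ v}) = ⟨u, hune⟩ := Subtype.ext h
            exact hun (this ▸ b.2)
          rcases hrel with (h | ⟨hxu, _⟩ | ⟨hyu, _⟩) | (h | ⟨hyu, _⟩ | ⟨hxu, _⟩)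
          · exact Adj.reachable (by exact h : (G.induce (S j)).Adj _ _)
          · exact absurd hxu hau
          · exact absurd hyu hbu
          · exact Adj.reachable (by exact h.symm : (G.induce (S j)).Adj _ _)
          · exact absurd hyu hbu
          · exact absurd hxu hau
        · intro b
          have hb : (b : V) ∈ Subtype.val '' S' j := hSj ▸ b.2
          obtain ⟨x, hx, hxe⟩ := hb
          refine ⟨⟨x, hx⟩, ?_⟩
          have he : (⟨(x : V), hmemS j ⟨x, x.2⟩ hx⟩ : ↥(S j)) = b := Subtype.ext hxe
          cases he
          exact Reachable.refl _
end

section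
/- Let G be a 3P_1-free graph (G has no independent set of size 3) and let (s_1,t_1), …, (s_k,t_k) be terminal pairs with all 2k terminal vertices distinct. If G has pairwise vertex-disjoint paths P^1, …, P^k with P^i an s_i–t_i path, then G has such paths in which every path has at most 4 vertices. -/
namespace SimpleGraph

variable {V : Type*} {G : SimpleGraph V}

theorem adj_or_adj_or_adj_of_isEmpty_bot_embedding
    (hfree : IsEmpty ((⊥ : SimpleGraph (Fin 3)) ↪g G))
    {x y z : V} (hxy : x ≠ y) (hxz : x ≠ z) (hyz : y ≠ z) :
    G.Adj x y ∨ G.Adj x z ∨ G.Adj y z := by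
  by_contra! hindep
  refine hfree.false ⟨⟨![x, y, z], fun i j hij => ?_⟩, fun {i j} => ?_⟩
  · fin_cases i <;> fin_cases j <;> simp_all [eq_comm]
  · simp only [bot_adj, iff_false]
    change ¬G.Adj (![x, y, z] i) (![x, y, z] j)
    fin_cases i <;> fin_cases j <;> simp_all [G.adj_comm]

namespace Walk

variable {u v : V}

theorem exists_shortcut_of_adj_getVert (p : G.Walk u v) {i j : ℕ} (hij : i + 1 < j)
    (hj : j ≤ p.length) (h : G.Adj (p.getVert i) (p.getVert j)) :
    ∃ q : G.Walk u v, q.length < p.length ∧ q.support ⊆ p.support := by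
  refine ⟨(p.take i).append (cons h (p.drop j)), ?_, ?_⟩
  · simp only [length_append, take_length, length_cons, drop_length]
    omega
  · simp only [support_append, support_cons, List.tail_cons, support_take,
      drop_support_eq_support_drop_min]
    exact List.append_subset.2 ⟨List.take_subset _ _, List.drop_subset _ _⟩

theorem IsPath.exists_shortcut_of_four_le_length
    (hfree : IsEmpty ((⊥ : SimpleGraph (Fin 3)) ↪g G))
    {p : G.Walk u v} (hp : p.IsPath) (hlen : 4 ≤ p.length) :
    ∃ q : G.Walk u v, q.length < p.length ∧ q.support ⊆ p.support := by
  have hne (i j : ℕ) (hij : i < j) (hj : j ≤ 4) : p.getVert i ≠ p.getVert j :=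
    fun heq => hij.ne (hp.getVert_injOn (by simp; omega) (by simp; omega) heq)
  rcases adj_or_adj_or_adj_of_isEmpty_bot_embedding hfree
      (hne 0 2 (by norm_num) (by norm_num)) (hne 0 4 (by norm_num) le_rfl)
      (hne 2 4 (by norm_num) le_rfl) with h | h | h
  · exact p.exists_shortcut_of_adj_getVert (by norm_num) (by omega) h
  · exact p.exists_shortcut_of_adj_getVert (by norm_num) hlen h
  · exact p.exists_shortcut_of_adj_getVert (by norm_num) hlen h

theorem exists_isPath_support_subset_length_le_three
    (hfree : IsEmpty ((⊥ : SimpleGraph (Fin 3)) ↪g G)) (p : G.Walk u v) :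
    ∃ q : G.Walk u v, q.IsPath ∧ q.support ⊆ p.support ∧ q.length ≤ 3 := by
  classical
  by_cases hshort : p.bypass.length ≤ 3
  · exact ⟨p.bypass, p.bypass_isPath, p.support_bypass_subset_support, hshort⟩
  obtain ⟨r, hr, hrp⟩ :=
    p.bypass_isPath.exists_shortcut_of_four_le_length hfree (by omega)
  have : r.length < p.length := hr.trans_le p.length_bypass_le_length
  obtain ⟨q, hq, hqr, hq3⟩ := exists_isPath_support_subset_length_le_three hfree r
  refine ⟨q, hq, List.Subset.trans hqr ?_, hq3⟩
  exact List.Subset.trans hrp p.support_bypass_subset_support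
termination_by p.length

end Walk

end SimpleGraph

theorem stmt_11_general {V : Type*} (G : SimpleGraph V)
    (hfree : IsEmpty ((⊥ : SimpleGraph (Fin 3)) ↪g G))
    (k : ℕ) (s t : Fin k → V)
    (h : HasDisjointPaths G s t) :
    ∃ P : (i : Fin k) → G.Walk (s i) (t i),
      (∀ i, (P i).IsPath) ∧
      (Pairwise fun i j => ((P i).support).Disjoint ((P j).support)) ∧
      ∀ i, (P i).support.length ≤ 4 := by
  obtain ⟨P, -, hdisj⟩ := h
  choose Q hQ hQP hQ3 using fun i => (P i).exists_isPath_support_subset_length_le_three hfree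
  refine ⟨Q, hQ, fun i j hij => ?_, fun i =>
    (Q i).length_support.trans_le (Nat.succ_le_succ (hQ3 i))⟩
  exact List.disjoint_of_subset_left (hQP i) (List.disjoint_of_subset_right (hQP j) (hdisj hij))

/-- In a `3P₁`-free graph (no independent set of size 3), if a Disjoint Paths instance
has a solution, then it has a solution in which every path has at most `4` vertices. -/
theorem stmt_11 {V : Type*} [Fintype V] (G : SimpleGraph V)
    (hfree : IsEmpty ((⊥ : SimpleGraph (Fin 3)) ↪g G))
    (k : ℕ) (s t : Fin k → V)
    (hinj : Function.Injective (Sum.elim s t))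
    (h : HasDisjointPaths G s t) :
    ∃ P : (i : Fin k) → G.Walk (s i) (t i),
      (∀ i, (P i).IsPath) ∧
      (Pairwise fun i j => ((P i).support).Disjoint ((P j).support)) ∧
      ∀ i, (P i).support.length ≤ 4 :=
  stmt_11_general G hfree k s t h
end

section
/- Let G be a cobipartite graph whose vertex set is partitioned into two cliques A and B. Let (s_1,t_1), …, (s_k,t_k) be terminal pairs with all 2k terminal vertices distinct such that s_i is not adjacent to t_i for every i, and let T denote the set of all 2k terminal vertices. Define a graph G'' on vertex set (V(G)\T) ∪ {x_1,…,x_k}, where x_1,…,x_k are new vertices, with the following edges: two non-terminal vertices u and v are adjacent in G'' if and only if u and v are adjacent in G and one of them lies in A and the other in B; a new vertex x_i is adjacent in G'' to a non-terminal vertex y if and only if (y is adjacent to s_i in G and y and s_i lie in different parts of {A,B}) or (y is adjacent to t_i in G and y and t_i lie in different parts of {A,B}); the vertices x_1,…,x_k are pairwise non-adjacent. Then G has pairwise vertex-disjoint paths P^1, …, P^k with P^i an s_i–t_i path if and only if G'' has a matching of size at least k. -/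
open SimpleGraph

private lemma path3 {V : Type*} {G : SimpleGraph V} {a b y : V} (h1 : G.Adj a y)
    (h2 : G.Adj y b) (hab : a ≠ b) :
    ∃ P : G.Walk a b, P.IsPath ∧ ∀ z ∈ P.support, z = a ∨ z = b ∨ z = y := by
  refine ⟨Walk.cons h1 (Walk.cons h2 Walk.nil), ?_, ?_⟩
  · rw [Walk.isPath_def]
    simp [h1.ne, h2.ne, hab]
  · intro z hz
    simp [Walk.support_cons] at hz
    tauto

private lemma path4 {V : Type*} {G : SimpleGraph V} {A B : Set V} (hA : G.IsClique A)
    (hB : G.IsClique B) {a b u v : V} (ha : a ∈ A) (hb : b ∈ B) (hu : u ∈ A) (hv : v ∈ B)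
    (huv : G.Adj u v) (hau : a ≠ u) (hav : a ≠ v) (hab : a ≠ b) (hub : u ≠ b) (hvb : v ≠ b) :
    ∃ P : G.Walk a b, P.IsPath ∧ ∀ z ∈ P.support, z = a ∨ z = b ∨ z = u ∨ z = v := by
  refine ⟨Walk.cons (hA ha hu hau) (Walk.cons huv (Walk.cons (hB hv hb hvb) Walk.nil)), ?_, ?_⟩
  · rw [Walk.isPath_def]
    simp [hau, hav, hab, hub, hvb, huv.ne]
  · intro z hz
    simp [Walk.support_cons] at hz
    tauto

private lemma exists_cross_edge {V : Type*} {G : SimpleGraph V} {A B : Set V}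
    (hdisj : Disjoint A B) (hcover : ∀ z : V, z ∈ A ∨ z ∈ B) :
    ∀ {u v : V} (w : G.Walk u v), u ∈ A → v ∈ B →
      ∃ a b, a ∈ A ∧ b ∈ B ∧ G.Adj a b ∧ a ∈ w.support ∧ b ∈ w.support := by
  intro u v w
  induction w with
  | nil =>
    intro hu hv
    exact absurd hv (Set.disjoint_left.mp hdisj hu)
  | @cons u x v h p ih =>
    intro hu hv
    rcases hcover x with hx | hx
    · obtain ⟨a, b, h1, h2, h3, h4, h5⟩ := ih hx hv
      exact ⟨a, b, h1, h2, h3, by simp [Walk.support_cons, h4],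
        by simp [Walk.support_cons, h5]⟩
    · exact ⟨u, x, hu, hx, h, by simp, by simp [Walk.support_cons, p.start_mem_support]⟩

/-- For a cobipartite graph `G` with cliques `A, B` and terminal pairs `(s i, t i)` of
pairwise distinct, pairwise non-adjacent terminals, the auxiliary bipartite-style graph
`G''` (on the non-terminal vertices together with one new vertex `x i` per terminal
pair) has a matching of size at least `k` iff `G` has the required disjoint paths. -/
theorem stmt_12 {V : Type*} [Fintype V] (G : SimpleGraph V) (A B : Set V)
    (hpart : A ∪ B = Set.univ) (hdisjAB : Disjoint A B)
    (hA : G.IsClique A) (hB : G.IsClique B)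
    (k : ℕ) (s t : Fin k → V)
    (hinj : Function.Injective (Sum.elim s t))
    (hnonadj : ∀ i, ¬ G.Adj (s i) (t i))
    (G'' : SimpleGraph ({v : V // v ∉ Set.range s ∪ Set.range t} ⊕ Fin k))
    (hG'' : ∀ x y, G''.Adj x y ↔
      match x, y with
      | Sum.inl a, Sum.inl b => G.Adj a b ∧
          (((a : V) ∈ A ∧ (b : V) ∈ B) ∨ ((a : V) ∈ B ∧ (b : V) ∈ A))
      | Sum.inl a, Sum.inr i =>
          (G.Adj (s i) a ∧ ((s i ∈ A ∧ (a : V) ∈ B) ∨ (s i ∈ B ∧ (a : V) ∈ A))) ∨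
          (G.Adj (t i) a ∧ ((t i ∈ A ∧ (a : V) ∈ B) ∨ (t i ∈ B ∧ (a : V) ∈ A)))
      | Sum.inr i, Sum.inl a =>
          (G.Adj (s i) a ∧ ((s i ∈ A ∧ (a : V) ∈ B) ∨ (s i ∈ B ∧ (a : V) ∈ A))) ∨
          (G.Adj (t i) a ∧ ((t i ∈ A ∧ (a : V) ∈ B) ∨ (t i ∈ B ∧ (a : V) ∈ A)))
      | Sum.inr _, Sum.inr _ => False) :
    HasDisjointPaths G s t ↔
      ∃ M : G''.Subgraph, M.IsMatching ∧ k ≤ M.edgeSet.ncard := by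
  classical
  have hst : ∀ i, s i ≠ t i := by
    intro i h
    have := hinj (a₁ := Sum.inl i) (a₂ := Sum.inr i) (by simpa using h)
    simp at this
  have hss : ∀ {i j : Fin k}, s i = s j → i = j := by
    intro i j h
    have := hinj (a₁ := Sum.inl i) (a₂ := Sum.inl j) (by simpa using h)
    simpa using this
  have htt : ∀ {i j : Fin k}, t i = t j → i = j := by
    intro i j h
    have := hinj (a₁ := Sum.inr i) (a₂ := Sum.inr j) (by simpa using h)
    simpa using this
  have hstne : ∀ i j, s i ≠ t j := by
    intro i j h
    have := hinj (a₁ := Sum.inl i) (a₂ := Sum.inr j) (by simpa using h)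
    simp at this
  have hsT : ∀ i, s i ∈ (Set.range s ∪ Set.range t) := fun i => Or.inl ⟨i, rfl⟩
  have htT : ∀ i, t i ∈ (Set.range s ∪ Set.range t) := fun i => Or.inr ⟨i, rfl⟩
  have hcover : ∀ z : V, z ∈ A ∨ z ∈ B := by
    intro z
    have : z ∈ A ∪ B := hpart.symm ▸ Set.mem_univ z
    exact this
  have hnotAB : ∀ z : V, z ∈ A → z ∈ B → False :=
    fun z h h' => Set.disjoint_left.mp hdisjAB h h'
  have hsides : ∀ i, (s i ∈ A ∧ t i ∈ B) ∨ (s i ∈ B ∧ t i ∈ A) := by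
    intro i
    rcases hcover (s i) with hs' | hs' <;> rcases hcover (t i) with ht' | ht'
    · exact absurd (hA hs' ht' (hst i)) (hnonadj i)
    · exact Or.inl ⟨hs', ht'⟩
    · exact Or.inr ⟨hs', ht'⟩
    · exact absurd (hB hs' ht' (hst i)) (hnonadj i)
  have hsne' : ∀ (i) (w : {v : V // v ∉ (Set.range s ∪ Set.range t)}), s i ≠ ↑w := fun i w h => w.2 (h ▸ hsT i)
  have htne' : ∀ (i) (w : {v : V // v ∉ (Set.range s ∪ Set.range t)}), t i ≠ ↑w := fun i w h => w.2 (h ▸ htT i)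
  constructor
  · rintro ⟨P, hpath, hdisjP⟩
    have hterm : ∀ i, ∀ v ∈ (P i).support, v ∈ (Set.range s ∪ Set.range t) → v = s i ∨ v = t i := by
      intro i v hv hvT
      rcases hvT with ⟨j, rfl⟩ | ⟨j, rfl⟩
      · by_cases h : j = i
        · exact Or.inl (by rw [h])
        · exact absurd hv (hdisjP h ((P j).start_mem_support))
      · by_cases h : j = i
        · exact Or.inr (by rw [h])
        · exact absurd hv (hdisjP h ((P j).end_mem_support))
    have key : ∀ i, ∃ x y : ({v : V // v ∉ (Set.range s ∪ Set.range t)} ⊕ Fin k), G''.Adj x y ∧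
        ∀ z, (z = x ∨ z = y) →
          (∃ v : {v : V // v ∉ (Set.range s ∪ Set.range t)}, z = Sum.inl v ∧ (v : V) ∈ (P i).support) ∨ z = Sum.inr i := by
      intro i
      have hcr : ∃ a b, a ∈ A ∧ b ∈ B ∧ G.Adj a b ∧ a ∈ (P i).support ∧ b ∈ (P i).support := by
        rcases hsides i with ⟨h1, h2⟩ | ⟨h1, h2⟩
        · exact exists_cross_edge hdisjAB hcover (P i) h1 h2
        · obtain ⟨a, b, p1, p2, p3, p4, p5⟩ :=
            exists_cross_edge hdisjAB hcover (P i).reverse h2 h1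
          rw [Walk.support_reverse, List.mem_reverse] at p4 p5
          exact ⟨a, b, p1, p2, p3, p4, p5⟩
      obtain ⟨a, b, haA, hbB, hab, haS, hbS⟩ := hcr
      by_cases haT : a ∈ (Set.range s ∪ Set.range t)
      · have hbT : b ∉ (Set.range s ∪ Set.range t) := by
          intro hbT
          rcases hterm i a haS haT with rfl | rfl <;> rcases hterm i b hbS hbT with h | h
          · exact hab.ne h.symm
          · exact hnonadj i (h ▸ hab)
          · exact hnonadj i (h ▸ hab).symm
          · exact hab.ne h.symm
        rcases hterm i a haS haT with rfl | rfl
        · refine ⟨Sum.inr i, Sum.inl ⟨b, hbT⟩, ?_, ?_⟩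
          · rw [hG'']
            exact Or.inl ⟨hab, Or.inl ⟨haA, hbB⟩⟩
          · rintro z (rfl | rfl)
            · exact Or.inr rfl
            · exact Or.inl ⟨⟨b, hbT⟩, rfl, hbS⟩
        · refine ⟨Sum.inr i, Sum.inl ⟨b, hbT⟩, ?_, ?_⟩
          · rw [hG'']
            exact Or.inr ⟨hab, Or.inl ⟨haA, hbB⟩⟩
          · rintro z (rfl | rfl)
            · exact Or.inr rfl
            · exact Or.inl ⟨⟨b, hbT⟩, rfl, hbS⟩
      · by_cases hbT : b ∈ (Set.range s ∪ Set.range t)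
        · rcases hterm i b hbS hbT with rfl | rfl
          · refine ⟨Sum.inr i, Sum.inl ⟨a, haT⟩, ?_, ?_⟩
            · rw [hG'']
              exact Or.inl ⟨hab.symm, Or.inr ⟨hbB, haA⟩⟩
            · rintro z (rfl | rfl)
              · exact Or.inr rfl
              · exact Or.inl ⟨⟨a, haT⟩, rfl, haS⟩
          · refine ⟨Sum.inr i, Sum.inl ⟨a, haT⟩, ?_, ?_⟩
            · rw [hG'']
              exact Or.inr ⟨hab.symm, Or.inr ⟨hbB, haA⟩⟩
            · rintro z (rfl | rfl)
              · exact Or.inr rfl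
              · exact Or.inl ⟨⟨a, haT⟩, rfl, haS⟩
        · refine ⟨Sum.inl ⟨a, haT⟩, Sum.inl ⟨b, hbT⟩, ?_, ?_⟩
          · rw [hG'']
            exact ⟨hab, Or.inl ⟨haA, hbB⟩⟩
          · rintro z (rfl | rfl)
            · exact Or.inl ⟨⟨a, haT⟩, rfl, haS⟩
            · exact Or.inl ⟨⟨b, hbT⟩, rfl, hbS⟩
    choose x y hadj hcond using key
    have hdisj2 : ∀ {i j : Fin k}, i ≠ j → ∀ z, (z = x i ∨ z = y i) →
        (z = x j ∨ z = y j) → False := by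
      intro i j hij z hzi hzj
      rcases hcond i z hzi with ⟨v, rfl, hv⟩ | rfl
      · rcases hcond j _ hzj with ⟨v', he, hv'⟩ | he
        · obtain rfl : v = v' := by injection he
          exact hdisjP hij hv hv'
        · simp at he
      · rcases hcond j _ hzj with ⟨v', he, hv'⟩ | he
        · simp at he
        · exact hij (by injection he)
    refine ⟨⨆ i, G''.subgraphOfAdj (hadj i), ?_, ?_⟩
    · apply Subgraph.IsMatching.iSup
        (fun i => Subgraph.IsMatching.subgraphOfAdj (hadj i))
      intro i j hij
      rw [support_subgraphOfAdj, support_subgraphOfAdj, Set.disjoint_left]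
      intro z hz hz'
      simp only [Set.mem_insert_iff, Set.mem_singleton_iff] at hz hz'
      exact hdisj2 hij z hz hz'
    · have hedge : (⨆ i, G''.subgraphOfAdj (hadj i)).edgeSet
          = Set.range (fun i : Fin k => s(x i, y i)) := by
        rw [Subgraph.edgeSet_iSup]
        ext e
        simp [edgeSet_subgraphOfAdj, eq_comm]
      have hinjf : Function.Injective (fun i : Fin k => s(x i, y i)) := by
        intro i j h
        by_contra hij
        simp only at h
        have hx : x i ∈ s(x j, y j) := h ▸ Sym2.mem_mk_left _ _
        exact hdisj2 hij (x i) (Or.inl rfl) (Sym2.mem_iff.mp hx)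
      calc k = (Set.univ : Set (Fin k)).ncard := by simp [Set.ncard_univ]
        _ = ((fun i : Fin k => s(x i, y i)) '' Set.univ).ncard :=
            (Set.ncard_image_of_injective _ hinjf).symm
        _ = (⨆ i, G''.subgraphOfAdj (hadj i)).edgeSet.ncard := by
            rw [Set.image_univ, hedge]
        _ ≤ (⨆ i, G''.subgraphOfAdj (hadj i)).edgeSet.ncard := le_rfl
  · rintro ⟨M, hM, hcard⟩
    rcases isEmpty_or_nonempty (Fin k) with hk | hk
    · exact ⟨fun i => hk.elim i, fun i => hk.elim i, fun i j _ => hk.elim i⟩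
    have huniq : ∀ e₁ ∈ M.edgeSet, ∀ e₂ ∈ M.edgeSet,
        ∀ z, z ∈ e₁ → z ∈ e₂ → e₁ = e₂ := by
      intro e₁ he₁ e₂ he₂ z hz₁ hz₂
      obtain ⟨w₁, rfl⟩ := Sym2.mem_iff_exists.mp hz₁
      obtain ⟨w₂, rfl⟩ := Sym2.mem_iff_exists.mp hz₂
      have h₁ : M.Adj z w₁ := Subgraph.mem_edgeSet.mp he₁
      have h₂ : M.Adj z w₂ := Subgraph.mem_edgeSet.mp he₂
      obtain ⟨w, -, hwu⟩ := hM (M.edge_vert h₁)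
      rw [hwu w₁ h₁, hwu w₂ h₂]
    have hone : ∀ e ∈ M.edgeSet, ∀ j j' : Fin k,
        Sum.inr j ∈ e → Sum.inr j' ∈ e → j = j' := by
      intro e he j j' hj hj'
      obtain ⟨w, rfl⟩ := Sym2.mem_iff_exists.mp hj
      have hadj : G''.Adj (Sum.inr j) w := M.adj_sub (Subgraph.mem_edgeSet.mp he)
      have hw : ∀ j'' : Fin k, w ≠ Sum.inr j'' := by
        rintro j'' rfl
        exact (hG'' _ _).mp hadj
      rcases Sym2.mem_iff.mp hj' with h | h
      · injection h with h
        exact h.symm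
      · exact absurd h.symm (hw j')
    set S : Set (Fin k) := {i | (Sum.inr i : {v : V // v ∉ (Set.range s ∪ Set.range t)} ⊕ Fin k) ∈ M.verts} with hSdef
    set Ex : Set (Sym2 ({v : V // v ∉ (Set.range s ∪ Set.range t)} ⊕ Fin k)) :=
      {e | e ∈ M.edgeSet ∧ ∃ j : Fin k, Sum.inr j ∈ e} with hExdef
    set Ef : Set (Sym2 ({v : V // v ∉ (Set.range s ∪ Set.range t)} ⊕ Fin k)) :=
      {e | e ∈ M.edgeSet ∧ ∀ j : Fin k, Sum.inr j ∉ e} with hEfdef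
    have hsplit : M.edgeSet = Ex ∪ Ef := by
      ext e
      simp only [hExdef, hEfdef, Set.mem_union, Set.mem_setOf_eq]
      tauto
    have hdisjE : Disjoint Ex Ef := by
      rw [Set.disjoint_left]
      rintro e ⟨he, j, hj⟩ ⟨-, hf⟩
      exact hf j hj
    have hcount : k ≤ Ex.ncard + Ef.ncard := by
      rw [← Set.ncard_union_eq hdisjE, ← hsplit]
      exact hcard
    have hExS : Ex.ncard ≤ S.ncard := by
      apply Set.ncard_le_ncard_of_injOn
        (fun e => if he : ∃ j : Fin k, Sum.inr j ∈ e then he.choose else Classical.arbitrary _)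
      · intro e he
        simp only [dif_pos he.2]
        exact Subgraph.mem_verts_of_mem_edge he.1 he.2.choose_spec
      · intro e he e' he' hpq
        simp only [dif_pos he.2, dif_pos he'.2] at hpq
        exact huniq e he.1 e' he'.1 _ he.2.choose_spec (hpq ▸ he'.2.choose_spec)
    have hSk : S.ncard + Sᶜ.ncard = k := by
      rw [Set.ncard_add_ncard_compl]
      simp [Nat.card_eq_fintype_card]
    have hcompl : Sᶜ.ncard ≤ Ef.ncard := by omega
    haveI : Fintype ↥(Sᶜ) := Fintype.ofFinite _
    haveI : Fintype ↥Ef := Fintype.ofFinite _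
    obtain ⟨emb⟩ : Nonempty (↥(Sᶜ) ↪ ↥Ef) := by
      apply Function.Embedding.nonempty_of_card_le
      rwa [← Nat.card_eq_fintype_card, ← Nat.card_eq_fintype_card,
        Nat.card_coe_set_eq, Nat.card_coe_set_eq]
    have hE : ∃ E : Fin k → Sym2 ({v : V // v ∉ (Set.range s ∪ Set.range t)} ⊕ Fin k),
        (∀ i, E i ∈ M.edgeSet) ∧
        (∀ i, (Sum.inr i ∈ E i) ∨ (∀ j : Fin k, Sum.inr j ∉ E i)) ∧
        Function.Injective E := by
      refine ⟨fun i => if h : i ∈ S then s(Sum.inr i, (hM h).choose)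
        else (emb ⟨i, h⟩ : Sym2 _), ?_, ?_, ?_⟩
      · intro i
        by_cases h : i ∈ S
        · simp only [dif_pos h]
          exact Subgraph.mem_edgeSet.mpr (hM h).choose_spec.1
        · simp only [dif_neg h]
          exact (emb ⟨i, h⟩).2.1
      · intro i
        by_cases h : i ∈ S
        · simp only [dif_pos h]
          exact Or.inl (Sym2.mem_mk_left _ _)
        · simp only [dif_neg h]
          exact Or.inr (emb ⟨i, h⟩).2.2
      · intro i j hij
        by_cases h : i ∈ S <;> by_cases h' : j ∈ S
        · simp only [dif_pos h, dif_pos h'] at hij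
          have : Sum.inr j ∈ s(Sum.inr i, (hM h).choose) := hij ▸ Sym2.mem_mk_left _ _
          rcases Sym2.mem_iff.mp this with hh | hh
          · injection hh with hh
            exact hh.symm
          · exfalso
            have hadj : M.Adj (Sum.inr i) (Sum.inr j) := hh ▸ (hM h).choose_spec.1
            exact (hG'' _ _).mp (M.adj_sub hadj)
        · exfalso
          simp only [dif_pos h, dif_neg h'] at hij
          exact (emb ⟨j, h'⟩).2.2 i (hij ▸ Sym2.mem_mk_left _ _)
        · exfalso
          simp only [dif_neg h, dif_pos h'] at hij
          exact (emb ⟨i, h⟩).2.2 j (hij.symm ▸ Sym2.mem_mk_left _ _)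
        · simp only [dif_neg h, dif_neg h'] at hij
          have := emb.injective (Subtype.ext hij)
          simpa using congrArg Subtype.val this
    obtain ⟨E, hEmem, hEi, hEinj⟩ := hE
    have hEone : ∀ i j : Fin k, Sum.inr j ∈ E i → j = i := by
      intro i j hj
      rcases hEi i with h | h
      · exact hone _ (hEmem i) j i hj h
      · exact absurd hj (h j)
    have huniqE : ∀ i j z, z ∈ E i → z ∈ E j → i = j :=
      fun i j z h1 h2 => hEinj (huniq _ (hEmem i) _ (hEmem j) z h1 h2)
    have paths : ∀ i, ∃ P : G.Walk (s i) (t i), P.IsPath ∧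
        ∀ v ∈ P.support, v = s i ∨ v = t i ∨
          ∃ hv : v ∉ (Set.range s ∪ Set.range t), (Sum.inl ⟨v, hv⟩ : {v : V // v ∉ (Set.range s ∪ Set.range t)} ⊕ Fin k) ∈ E i := by
      intro i
      rcases hEi i with hin | hfree
      · obtain ⟨w, hw⟩ := Sym2.mem_iff_exists.mp hin
        have hadjM : M.Adj (Sum.inr i) w := Subgraph.mem_edgeSet.mp (hw ▸ hEmem i)
        have hadj : G''.Adj (Sum.inr i) w := M.adj_sub hadjM
        obtain ⟨y, rfl⟩ : ∃ y' : {v : V // v ∉ (Set.range s ∪ Set.range t)}, w = Sum.inl y' := by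
          cases w with
          | inl y => exact ⟨y, rfl⟩
          | inr j => exact absurd ((hG'' _ _).mp hadj) not_false
        rw [hG''] at hadj
        have h12 : G.Adj (s i) (y : V) ∧ G.Adj (y : V) (t i) := by
          rcases hadj with ⟨ha, hc⟩ | ⟨ha, hc⟩
          · refine ⟨ha, ?_⟩
            rcases hc with ⟨hsA, hyB⟩ | ⟨hsB, hyA⟩
            · rcases hsides i with ⟨-, htB⟩ | ⟨hsB', -⟩
              · exact hB hyB htB (htne' i y).symm
              · exact (hnotAB _ hsA hsB').elim
            · rcases hsides i with ⟨hsA', -⟩ | ⟨-, htA⟩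
              · exact (hnotAB _ hsA' hsB).elim
              · exact hA hyA htA (htne' i y).symm
          · refine ⟨?_, ha.symm⟩
            rcases hc with ⟨htA, hyB⟩ | ⟨htB, hyA⟩
            · rcases hsides i with ⟨-, htB'⟩ | ⟨hsB, -⟩
              · exact (hnotAB _ htA htB').elim
              · exact hB hsB hyB (hsne' i y)
            · rcases hsides i with ⟨hsA, -⟩ | ⟨-, htA'⟩
              · exact hA hsA hyA (hsne' i y)
              · exact (hnotAB _ htA' htB).elim
        obtain ⟨P, hP, hsup⟩ := path3 h12.1 h12.2 (hst i)
        refine ⟨P, hP, ?_⟩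
        intro v hv
        rcases hsup v hv with rfl | rfl | rfl
        · exact Or.inl rfl
        · exact Or.inr (Or.inl rfl)
        · refine Or.inr (Or.inr ⟨y.2, ?_⟩)
          rw [hw]
          exact Sym2.mem_mk_right _ _
      · obtain ⟨p, q, hpq⟩ := Sym2.ind (f := fun e => ∃ a b, e = s(a, b))
          (fun a b => ⟨a, b, rfl⟩) (E i)
        have hadjM : M.Adj p q := Subgraph.mem_edgeSet.mp (hpq ▸ hEmem i)
        have hadj : G''.Adj p q := M.adj_sub hadjM
        obtain ⟨u, rfl⟩ : ∃ u : {v : V // v ∉ (Set.range s ∪ Set.range t)}, p = Sum.inl u := by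
          cases p with
          | inl u => exact ⟨u, rfl⟩
          | inr j => exact absurd (hpq ▸ Sym2.mem_mk_left _ _) (hfree j)
        obtain ⟨v, rfl⟩ : ∃ v : {v : V // v ∉ (Set.range s ∪ Set.range t)}, q = Sum.inl v := by
          cases q with
          | inl v => exact ⟨v, rfl⟩
          | inr j => exact absurd (hpq ▸ Sym2.mem_mk_right _ _) (hfree j)
        rw [hG''] at hadj
        obtain ⟨huv, hc⟩ := hadj
        have hmemu : (Sum.inl u : {v : V // v ∉ (Set.range s ∪ Set.range t)} ⊕ Fin k) ∈ E i := by
          rw [hpq]; exact Sym2.mem_mk_left _ _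
        have hmemv : (Sum.inl v : {v : V // v ∉ (Set.range s ∪ Set.range t)} ⊕ Fin k) ∈ E i := by
          rw [hpq]; exact Sym2.mem_mk_right _ _
        have build : ∀ (a b : {v : V // v ∉ (Set.range s ∪ Set.range t)}), (a : V) ∈ A → (b : V) ∈ B →
            G.Adj a b → ((Sum.inl a : {v : V // v ∉ (Set.range s ∪ Set.range t)} ⊕ Fin k) ∈ E i) →
            ((Sum.inl b : {v : V // v ∉ (Set.range s ∪ Set.range t)} ⊕ Fin k) ∈ E i) →
            ∃ P : G.Walk (s i) (t i), P.IsPath ∧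
              ∀ z ∈ P.support, z = s i ∨ z = t i ∨
                ∃ hz : z ∉ (Set.range s ∪ Set.range t), (Sum.inl ⟨z, hz⟩ : {v : V // v ∉ (Set.range s ∪ Set.range t)} ⊕ Fin k) ∈ E i := by
          intro a b haA hbB hab hamem hbmem
          rcases hsides i with ⟨hsA, htB⟩ | ⟨hsB, htA⟩
          · obtain ⟨P, hP, hsup⟩ := path4 hA hB hsA htB haA hbB hab
              (hsne' i a) (hsne' i b) (hst i) (htne' i a).symm (htne' i b).symm
            refine ⟨P, hP, ?_⟩
            intro z hz
            rcases hsup z hz with rfl | rfl | rfl | rfl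
            · exact Or.inl rfl
            · exact Or.inr (Or.inl rfl)
            · exact Or.inr (Or.inr ⟨a.2, hamem⟩)
            · exact Or.inr (Or.inr ⟨b.2, hbmem⟩)
          · obtain ⟨P, hP, hsup⟩ := path4 hB hA hsB htA hbB haA hab.symm
              (hsne' i b) (hsne' i a) (hst i) (htne' i b).symm (htne' i a).symm
            refine ⟨P, hP, ?_⟩
            intro z hz
            rcases hsup z hz with rfl | rfl | rfl | rfl
            · exact Or.inl rfl
            · exact Or.inr (Or.inl rfl)
            · exact Or.inr (Or.inr ⟨b.2, hbmem⟩)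
            · exact Or.inr (Or.inr ⟨a.2, hamem⟩)
        rcases hc with ⟨huA, hvB⟩ | ⟨huB, hvA⟩
        · exact build u v huA hvB huv hmemu hmemv
        · exact build v u hvA huB huv.symm hmemv hmemu
    choose P hP hPsup using paths
    refine ⟨P, hP, ?_⟩
    intro i j hij
    intro v hvi hvj
    rcases hPsup i v hvi with rfl | rfl | ⟨hv1, hm1⟩
    · rcases hPsup j _ hvj with h | h | ⟨hv2, -⟩
      · exact hij (hss h)
      · exact hstne i j h
      · exact hv2 (hsT i)
    · rcases hPsup j _ hvj with h | h | ⟨hv2, -⟩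
      · exact hstne j i h.symm
      · exact hij (htt h)
      · exact hv2 (htT i)
    · rcases hPsup j _ hvj with h | h | ⟨hv2, hm2⟩
      · exact hv1 (h ▸ hsT j)
      · exact hv1 (h ▸ htT j)
      · exact hij (huniqE i j _ hm1 hm2)
end

section
/- Let G be a (P_1 + P_3)-free graph with at least one vertex. Then the vertex set of G can be partitioned into nonempty sets D_1, …, D_p (for some p ≥ 1) such that for every i the subgraph of G induced by D_i is either 3P_1-free (has no independent set of size 3) or a disjoint union of complete graphs, and for all i ≠ j every vertex of D_i is adjacent to every vertex of D_j. -/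
/-!
Pass to the complement `Gᶜ`: the parts `Dᵢ` are the connected components of `Gᶜ`, so distinct
parts are completely joined in `G`. Since `P₁ + P₃` is the complement of the paw, `Gᶜ` is
paw-free, and by Olariu's theorem a connected paw-free graph is either triangle-free or complete
multipartite. Inside a part this says that `G[Dᵢ]` is `3P₁`-free or that non-adjacency of
`Gᶜ[Dᵢ]`, i.e. "equal or adjacent" in `G[Dᵢ]`, is transitive, which makes every component of
`G[Dᵢ]` a clique.
-/

open SimpleGraph

namespace SimpleGraph

variable {V W : Type*}

/-- `H` has no induced paw: no triangle `abc` with a vertex `x` adjacent to `a` only. -/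
def IsPawFree (H : SimpleGraph W) : Prop :=
  ∀ ⦃a b c x : W⦄, H.Adj a b → H.Adj b c → H.Adj a c →
    H.Adj x a → ¬H.Adj x b → ¬H.Adj x c → False

namespace IsPawFree

variable {H : SimpleGraph W} (hH : H.IsPawFree)
include hH

theorem comap {H' : SimpleGraph V} (f : H' ↪g H) : H'.IsPawFree :=
  fun _ _ _ _ hab hbc hac hxa hxb hxc =>
    hH (f.map_adj_iff.2 hab) (f.map_adj_iff.2 hbc) (f.map_adj_iff.2 hac) (f.map_adj_iff.2 hxa)
      (mt f.map_adj_iff.1 hxb) (mt f.map_adj_iff.1 hxc)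

theorem adj_or_adj_of_adj {a b c x : W} (hab : H.Adj a b) (hbc : H.Adj b c) (hac : H.Adj a c)
    (hxa : H.Adj x a) : H.Adj x b ∨ H.Adj x c := by
  by_contra! h
  exact hH hab hbc hac hxa h.1 h.2

theorem exists_triangle_of_reachable {u v : W} (huv : H.Reachable u v)
    (hu : ∃ a b, H.Adj u a ∧ H.Adj a b ∧ H.Adj u b) :
    ∃ a b, H.Adj v a ∧ H.Adj a b ∧ H.Adj v b := by
  obtain ⟨p⟩ := huv
  induction p with
  | nil => exact hu
  | cons hxy _ ih =>
    obtain ⟨a, b, hxa, hab, hxb⟩ := hu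
    apply ih
    rcases hH.adj_or_adj_of_adj hxa hab hxb hxy.symm with hya | hyb
    · exact ⟨_, _, hxy.symm, hxa, hya⟩
    · exact ⟨_, _, hxy.symm, hxb, hyb⟩

theorem adj_triangle_of_walk {u w : W} (p : H.Walk u w) {b c : W}
    (hub : H.Adj u b) (hbc : H.Adj b c) (huc : H.Adj u c) :
    H.Adj w u ∨ H.Adj w b ∨ H.Adj w c := by
  induction p generalizing b c with
  | nil => exact Or.inr (Or.inl hub)
  | @cons u y w huy _ ih =>
    by_contra! hw
    have moved : ∀ d, H.Adj u d → H.Adj y d → ¬H.Adj w d → False := fun d hud hyd hwd => by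
      rcases ih huy.symm hud hyd with hwy | hwu | hwd'
      · exact hH huy.symm hud hyd hwy hw.1 hwd
      · exact hw.1 hwu
      · exact hwd hwd'
    rcases hH.adj_or_adj_of_adj hub hbc huc huy.symm with hyb | hyc
    · exact moved b hub hyb hw.2.1
    · exact moved c huc hyc hw.2.2

theorem isCompleteMultipartite (hconn : H.Connected) {t₁ t₂ t₃ : W}
    (h₁₂ : H.Adj t₁ t₂) (h₂₃ : H.Adj t₂ t₃) (h₁₃ : H.Adj t₁ t₃) :
    H.IsCompleteMultipartite := by
  refine ⟨fun u w v huw hwv huv => ?_⟩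
  obtain ⟨a, b, hua, hab, hub⟩ :=
    hH.exists_triangle_of_reachable (hconn t₁ u) ⟨t₂, t₃, h₁₂, h₂₃, h₁₃⟩
  obtain ⟨x, hux, hvx⟩ : ∃ x, H.Adj u x ∧ H.Adj v x :=
    (hH.adj_or_adj_of_adj hua hab hub huv.symm).elim (⟨a, hua, ·⟩) (⟨b, hub, ·⟩)
  obtain ⟨p⟩ := hconn u w
  rcases hH.adj_triangle_of_walk p huv hvx hux with hwu | hwv' | hwx
  · exact huw hwu.symm
  · exact hwv hwv'
  · exact hH hux.symm huv hvx.symm hwx (huw ·.symm) hwv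

end IsPawFree

theorem isPawFree_compl_of_free_sum_pathGraph {G : SimpleGraph V}
    (hfree : IsEmpty (((⊥ : SimpleGraph (Fin 1)) ⊕g pathGraph 3) ↪g G)) : Gᶜ.IsPawFree := by
  intro a b c x hab hbc hac hxa hxb hxc
  have hxb' : G.Adj x b := by
    by_contra h
    exact hxb ⟨fun hxb => hxc (hxb ▸ hbc), h⟩
  have hxc' : G.Adj x c := by
    by_contra h
    exact hxc ⟨fun hxc => hxb (hxc ▸ hbc.symm), h⟩
  -- `b - x - c` is an induced `P₃` of `G` and `a` has no neighbour on it
  obtain ⟨hab, nab⟩ := hab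
  obtain ⟨hbc, nbc⟩ := hbc
  obtain ⟨hac, nac⟩ := hac
  obtain ⟨hxa, nxa⟩ := hxa
  refine hfree.false ⟨⟨Sum.elim (fun _ => a) ![b, x, c], ?_⟩, ?_⟩
  · rintro (s | s) (t | t) h <;> fin_cases s <;> fin_cases t <;> simp_all [eq_comm]
  · intro s t
    change G.Adj (Sum.elim (fun _ => a) ![b, x, c] s) (Sum.elim (fun _ => a) ![b, x, c] t) ↔ _
    rcases s with s | s <;> rcases t with t | t <;> fin_cases s <;> fin_cases t <;>
      simp_all [adj_comm, pathGraph_adj]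

theorem compl_induce (G : SimpleGraph V) (s : Set V) : (G.induce s)ᶜ = Gᶜ.induce s := by
  ext u v
  simp [Subtype.ext_iff]

theorem Reachable.eq_or_adj_of_isCompleteMultipartite_compl {H : SimpleGraph W}
    (hH : Hᶜ.IsCompleteMultipartite) {u v : W} (huv : H.Reachable u v) : u = v ∨ H.Adj u v := by
  obtain ⟨p⟩ := huv
  induction p with
  | nil => exact Or.inl rfl
  | @cons u y v huy _ ih =>
    have hnot : ∀ {x z : W}, x = z ∨ H.Adj x z → ¬Hᶜ.Adj x z := fun hxz h => hxz.elim h.1 h.2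
    by_contra! h
    exact hH.trans _ _ _ (hnot (Or.inr huy)) (hnot ih) ⟨h.1, h.2⟩

theorem isClique_supp_of_isCompleteMultipartite_compl {H : SimpleGraph W}
    (hH : Hᶜ.IsCompleteMultipartite) (c : H.ConnectedComponent) : H.IsClique c.supp := by
  intro u hu v hv huv
  rw [ConnectedComponent.mem_supp_iff] at hu hv
  exact ((ConnectedComponent.exact (hu.trans hv.symm)).eq_or_adj_of_isCompleteMultipartite_compl
    hH).resolve_left huv

theorem adj_of_mem_supp_of_ne {G : SimpleGraph V} {C C' : Gᶜ.ConnectedComponent} (hCC' : C ≠ C')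
    {a b : V} (ha : a ∈ C.supp) (hb : b ∈ C'.supp) : G.Adj a b := by
  rw [ConnectedComponent.mem_supp_iff] at ha hb
  by_contra hab
  refine hCC' (ha.symm.trans (hb ▸ ?_))
  obtain rfl | hne := eq_or_ne a b
  · rfl
  · exact ConnectedComponent.connectedComponentMk_eq_of_adj ⟨hne, hab⟩

theorem isEmpty_bot_embedding_or_isClique_supp {G : SimpleGraph V} (hG : Gᶜ.IsPawFree)
    (C : Gᶜ.ConnectedComponent) :
    IsEmpty ((⊥ : SimpleGraph (Fin 3)) ↪g G.induce C.supp) ∨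
      ∀ c : (G.induce C.supp).ConnectedComponent, (G.induce C.supp).IsClique c.supp := by
  rcases isEmpty_or_nonempty ((⊥ : SimpleGraph (Fin 3)) ↪g G.induce C.supp) with h | ⟨⟨f⟩⟩
  · exact Or.inl h
  refine Or.inr (isClique_supp_of_isCompleteMultipartite_compl ?_)
  have hf : ∀ i j, i ≠ j → (G.induce C.supp)ᶜ.Adj (f i) (f j) :=
    fun i j hij => ⟨f.injective.ne hij, fun h => (bot_adj i j).1 (f.map_adj_iff.1 h)⟩
  rw [compl_induce] at hf ⊢
  exact (hG.comap (Embedding.induce _)).isCompleteMultipartite C.connected_toSimpleGraph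
    (hf 0 1 (by decide)) (hf 1 2 (by decide)) (hf 0 2 (by decide))

end SimpleGraph

/-- The vertex set of a `(P₁ + P₃)`-free graph with at least one vertex can be
partitioned into nonempty sets `D 1, …, D p` such that each `D i` induces a subgraph
that is `3P₁`-free or a disjoint union of complete graphs, and all edges between
distinct parts are present. -/
theorem stmt_13 {V : Type*} [Fintype V] [Nonempty V] (G : SimpleGraph V)
    (hfree : IsEmpty ((((⊥ : SimpleGraph (Fin 1)) ⊕g pathGraph 3)) ↪g G)) :
    ∃ (p : ℕ) (_ : 1 ≤ p) (D : Fin p → Set V),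
      (∀ i, (D i).Nonempty) ∧
      (Pairwise fun i j => Disjoint (D i) (D j)) ∧
      (⋃ i, D i) = Set.univ ∧
      (∀ i, IsEmpty ((⊥ : SimpleGraph (Fin 3)) ↪g G.induce (D i)) ∨
        ∀ c : (G.induce (D i)).ConnectedComponent, (G.induce (D i)).IsClique c.supp) ∧
      (∀ i j, i ≠ j → ∀ a ∈ D i, ∀ b ∈ D j, G.Adj a b) := by
  have hpaw := isPawFree_compl_of_free_sum_pathGraph hfree
  have : Nonempty Gᶜ.ConnectedComponent := ⟨Gᶜ.connectedComponentMk (Classical.arbitrary V)⟩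
  let e := (Fintype.equivFin Gᶜ.ConnectedComponent).symm
  refine ⟨_, Fintype.card_pos, fun i => (e i).supp, fun i => (e i).nonempty_supp,
    fun i j hij => Gᶜ.pairwise_disjoint_supp_connectedComponent (e.injective.ne hij), ?_,
    fun i => isEmpty_bot_embedding_or_isClique_supp hpaw (e i),
    fun i j hij _ ha _ hb => adj_of_mem_supp_of_ne (e.injective.ne hij) ha hb⟩
  rw [e.surjective.iUnion_comp fun C => C.supp]
  exact Gᶜ.iUnion_connectedComponentSupp
end
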